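/- arXiv:2510.04181 — 13 statements merged into one kernel-verified Lean document; each statement's English description precedes it below -/
import Mathlib

section
/- Let A be an associative (not necessarily unital) algebra over a field of characteristic 0 satisfying the second-type identity abc - acb - bac + bca + cab - cba = 0 for all a,b,c. Then for all a,b,c,d in A: dcab = dcba + cdab - cdba + adcb - acdb. -/
theorem second_type_deg4 {K A : Type*} [Field K] [CharZero K]
    [NonUnitalRing A] [Module K A] [IsScalarTower K A A] [SMulCommClass K A A]
    (h : ∀ a b c : A,
      a*b*c - a*c*b - b*a*c + b*c*a + c*a*b - c*b*a = 0) :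
    ∀ a b c d : A,
      d*c*a*b = d*c*b*a + c*d*a*b - c*d*b*a + a*d*c*b - a*c*d*b := by
  intro a b c d
  have E : (d*c*a*b - d*c*b*a - c*d*a*b + c*d*b*a - a*d*c*b + a*c*d*b)
       + (d*c*a*b - d*c*b*a - c*d*a*b + c*d*b*a - a*d*c*b + a*c*d*b)
   = d*(a*b*c - a*c*b - b*a*c + b*c*a + c*a*b - c*b*a)
     - ((a*b)*c*d - (a*b)*d*c - c*(a*b)*d + c*d*(a*b) + d*(a*b)*c - d*c*(a*b))
     - ((a*b)*c*d - (a*b)*d*c - c*(a*b)*d + c*d*(a*b) + d*(a*b)*c - d*c*(a*b))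
     - c*(a*b*d - a*d*b - b*a*d + b*d*a + d*a*b - d*b*a)
     - b*(a*c*d - a*d*c - c*a*d + c*d*a + d*a*c - d*c*a)
     + (a*c*d - a*d*c - c*a*d + c*d*a + d*a*c - d*c*a)*b
     + ((b*a)*c*d - (b*a)*d*c - c*(b*a)*d + c*d*(b*a) + d*(b*a)*c - d*c*(b*a))
     - ((b*c)*a*d - (b*c)*d*a - a*(b*c)*d + a*d*(b*c) + d*(b*c)*a - d*a*(b*c))
     + a*(b*c*d - b*d*c - c*b*d + c*d*b + d*b*c - d*c*b)
     + ((b*d)*a*c - (b*d)*c*a - a*(b*d)*c + a*c*(b*d) + c*(b*d)*a - c*a*(b*d)) := by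
    noncomm_ring
  rw [h a b c, h (a*b) c d, h a b d, h a c d, h (b*a) c d, h (b*c) a d, h b c d,
      h (b*d) a c] at E
  simp only [mul_zero, zero_mul, sub_zero, add_zero, zero_sub, neg_zero] at E
  set X : A := d*c*a*b - d*c*b*a - c*d*a*b + c*d*b*a - a*d*c*b + a*c*d*b with hX
  have h2 : (2:K) • X = 0 := by rw [two_smul]; exact E
  have hX0 : X = 0 := by
    have : ((2:K)⁻¹ * 2) • X = (0:A) := by rw [mul_smul, h2, smul_zero]
    rwa [inv_mul_cancel₀ (two_ne_zero), one_smul] at this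
  rw [← sub_eq_zero]
  calc d*c*a*b - (d*c*b*a + c*d*a*b - c*d*b*a + a*d*c*b - a*c*d*b) = X := by
        rw [hX]; abel
    _ = 0 := hX0
end

section
/- Let A be an associative algebra over a field of characteristic 0 satisfying the second-type identity abc - acb - bac + bca + cab - cba = 0. Then for all a,b,c,d,e in A: abcde = abdce and abcde = acbde; that is, in any product of five elements the three middle factors may be permuted arbitrarily without changing the product. -/
set_option maxHeartbeats 1000000 in
theorem second_type_middle_swap {K A : Type*} [Field K] [CharZero K]
    [NonUnitalRing A] [Module K A] [IsScalarTower K A A] [SMulCommClass K A A]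
    (h : ∀ a b c : A,
      a*b*c - a*c*b - b*a*c + b*c*a + c*a*b - c*b*a = 0) :
    ∀ a b c d e : A,
      a*b*c*d*e = a*b*d*c*e ∧ a*b*c*d*e = a*c*b*d*e := by
  intro a b c d e
  have hz : ∀ x : A, (6:ℤ) • x = 0 → x = 0 := by
    intro x hx
    have h2 : ((6:ℤ):K) • x = 0 := by rw [Int.cast_smul_eq_zsmul]; exact hx
    rcases smul_eq_zero.mp h2 with h3 | h3
    · exact absurd h3 (by norm_num)
    · exact h3
  constructor
  · rw [← sub_eq_zero]
    apply hz
    have key : (6:ℤ) • (a*b*c*d*e - a*b*d*c*e) =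
        (-1:ℤ) • (((a*b)*c*(d*e) - (a*b)*(d*e)*c - c*(a*b)*(d*e) + c*(d*e)*(a*b) + (d*e)*(a*b)*c - (d*e)*c*(a*b))) +
        (1:ℤ) • (((a*b)*(c*d)*e - (a*b)*e*(c*d) - (c*d)*(a*b)*e + (c*d)*e*(a*b) + e*(a*b)*(c*d) - e*(c*d)*(a*b))) +
        (1:ℤ) • (((a*b*c)*d*e - (a*b*c)*e*d - d*(a*b*c)*e + d*e*(a*b*c) + e*(a*b*c)*d - e*d*(a*b*c))) +
        (-1:ℤ) • (((a*b)*c*d - (a*b)*d*c - c*(a*b)*d + c*d*(a*b) + d*(a*b)*c - d*c*(a*b))*e) +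
        (-1:ℤ) • ((a*b*c - a*c*b - b*a*c + b*c*a + c*a*b - c*b*a)*(d*e)) +
        (2:ℤ) • (a*(b*(c*d)*e - b*e*(c*d) - (c*d)*b*e + (c*d)*e*b + e*b*(c*d) - e*(c*d)*b)) +
        (2:ℤ) • (a*(b*c*d - b*d*c - c*b*d + c*d*b + d*b*c - d*c*b)*e) +
        (3:ℤ) • ((a*b)*(c*d*e - c*e*d - d*c*e + d*e*c + e*c*d - e*d*c)) +
        (-2:ℤ) • ((a*b*(c*e*d) - a*(c*e*d)*b - b*a*(c*e*d) + b*(c*e*d)*a + (c*e*d)*a*b - (c*e*d)*b*a)) +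
        (2:ℤ) • ((a*(b*c*e)*d - a*d*(b*c*e) - (b*c*e)*a*d + (b*c*e)*d*a + d*a*(b*c*e) - d*(b*c*e)*a)) +
        (1:ℤ) • (((a*b)*c*(e*d) - (a*b)*(e*d)*c - c*(a*b)*(e*d) + c*(e*d)*(a*b) + (e*d)*(a*b)*c - (e*d)*c*(a*b))) +
        (1:ℤ) • (((a*b)*(c*e)*d - (a*b)*d*(c*e) - (c*e)*(a*b)*d + (c*e)*d*(a*b) + d*(a*b)*(c*e) - d*(c*e)*(a*b))) +
        (4:ℤ) • ((a*b*(c*e) - a*(c*e)*b - b*a*(c*e) + b*(c*e)*a + (c*e)*a*b - (c*e)*b*a)*d) +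
        (-2:ℤ) • (((a*b)*c*e - (a*b)*e*c - c*(a*b)*e + c*e*(a*b) + e*(a*b)*c - e*c*(a*b))*d) +
        (2:ℤ) • (a*(b*c*(e*d) - b*(e*d)*c - c*b*(e*d) + c*(e*d)*b + (e*d)*b*c - (e*d)*c*b)) +
        (-2:ℤ) • (a*(b*c*e - b*e*c - c*b*e + c*e*b + e*b*c - e*c*b)*d) +
        (2:ℤ) • ((a*b*(d*c*e) - a*(d*c*e)*b - b*a*(d*c*e) + b*(d*c*e)*a + (d*c*e)*a*b - (d*c*e)*b*a)) +
        (-2:ℤ) • ((a*(b*d)*(c*e) - a*(c*e)*(b*d) - (b*d)*a*(c*e) + (b*d)*(c*e)*a + (c*e)*a*(b*d) - (c*e)*(b*d)*a)) +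
        (-1:ℤ) • (((a*b)*(d*c)*e - (a*b)*e*(d*c) - (d*c)*(a*b)*e + (d*c)*e*(a*b) + e*(a*b)*(d*c) - e*(d*c)*(a*b))) +
        (1:ℤ) • (((a*b*d)*c*e - (a*b*d)*e*c - c*(a*b*d)*e + c*e*(a*b*d) + e*(a*b*d)*c - e*c*(a*b*d))) +
        (-1:ℤ) • ((a*b*d - a*d*b - b*a*d + b*d*a + d*a*b - d*b*a)*(c*e)) +
        (-2:ℤ) • (a*(b*(d*c)*e - b*e*(d*c) - (d*c)*b*e + (d*c)*e*b + e*b*(d*c) - e*(d*c)*b)) +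
        (2:ℤ) • (a*((b*d)*c*e - (b*d)*e*c - c*(b*d)*e + c*e*(b*d) + e*(b*d)*c - e*c*(b*d))) +
        (-1:ℤ) • (((a*b)*d*(e*c) - (a*b)*(e*c)*d - d*(a*b)*(e*c) + d*(e*c)*(a*b) + (e*c)*(a*b)*d - (e*c)*d*(a*b))) +
        (2:ℤ) • ((a*(b*e)*(c*d) - a*(c*d)*(b*e) - (b*e)*a*(c*d) + (b*e)*(c*d)*a + (c*d)*a*(b*e) - (c*d)*(b*e)*a)) +
        (-2:ℤ) • ((a*(b*e*c)*d - a*d*(b*e*c) - (b*e*c)*a*d + (b*e*c)*d*a + d*a*(b*e*c) - d*(b*e*c)*a)) +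
        (-3:ℤ) • ((a*(b*e)*c - a*c*(b*e) - (b*e)*a*c + (b*e)*c*a + c*a*(b*e) - c*(b*e)*a)*d) +
        (-2:ℤ) • (a*((b*e)*c*d - (b*e)*d*c - c*(b*e)*d + c*d*(b*e) + d*(b*e)*c - d*c*(b*e))) +
        (-2:ℤ) • ((a*(b*e)*(d*c) - a*(d*c)*(b*e) - (b*e)*a*(d*c) + (b*e)*(d*c)*a + (d*c)*a*(b*e) - (d*c)*(b*e)*a)) +
        (2:ℤ) • ((a*(b*e*d)*c - a*c*(b*e*d) - (b*e*d)*a*c + (b*e*d)*c*a + c*a*(b*e*d) - c*(b*e*d)*a)) +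
        (1:ℤ) • ((a*(b*e)*d - a*d*(b*e) - (b*e)*a*d + (b*e)*d*a + d*a*(b*e) - d*(b*e)*a)*c) +
        (-2:ℤ) • (((a*c)*b*(d*e) - (a*c)*(d*e)*b - b*(a*c)*(d*e) + b*(d*e)*(a*c) + (d*e)*(a*c)*b - (d*e)*b*(a*c))) +
        (2:ℤ) • (((a*c)*(b*d)*e - (a*c)*e*(b*d) - (b*d)*(a*c)*e + (b*d)*e*(a*c) + e*(a*c)*(b*d) - e*(b*d)*(a*c))) +
        (2:ℤ) • (((a*c*b)*d*e - (a*c*b)*e*d - d*(a*c*b)*e + d*e*(a*c*b) + e*(a*c*b)*d - e*d*(a*c*b))) +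
        (1:ℤ) • (((a*c)*b*d - (a*c)*d*b - b*(a*c)*d + b*d*(a*c) + d*(a*c)*b - d*b*(a*c))*e) +
        (2:ℤ) • ((a*(c*b*e)*d - a*d*(c*b*e) - (c*b*e)*a*d + (c*b*e)*d*a + d*a*(c*b*e) - d*(c*b*e)*a)) +
        (2:ℤ) • (((a*c)*b*(e*d) - (a*c)*(e*d)*b - b*(a*c)*(e*d) + b*(e*d)*(a*c) + (e*d)*(a*c)*b - (e*d)*b*(a*c))) +
        (-1:ℤ) • (((a*c)*(b*e)*d - (a*c)*d*(b*e) - (b*e)*(a*c)*d + (b*e)*d*(a*c) + d*(a*c)*(b*e) - d*(b*e)*(a*c))) +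
        (-4:ℤ) • (((a*c)*b*e - (a*c)*e*b - b*(a*c)*e + b*e*(a*c) + e*(a*c)*b - e*b*(a*c))*d) +
        (2:ℤ) • ((a*c*(d*b*e) - a*(d*b*e)*c - c*a*(d*b*e) + c*(d*b*e)*a + (d*b*e)*a*c - (d*b*e)*c*a)) +
        (-2:ℤ) • (((a*c)*(d*b)*e - (a*c)*e*(d*b) - (d*b)*(a*c)*e + (d*b)*e*(a*c) + e*(a*c)*(d*b) - e*(d*b)*(a*c))) +
        (2:ℤ) • (((a*c*d)*b*e - (a*c*d)*e*b - b*(a*c*d)*e + b*e*(a*c*d) + e*(a*c*d)*b - e*b*(a*c*d))) +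
        (2:ℤ) • (a*(c*(d*b)*e - c*e*(d*b) - (d*b)*c*e + (d*b)*e*c + e*c*(d*b) - e*(d*b)*c)) +
        (-2:ℤ) • (((a*c)*d*(e*b) - (a*c)*(e*b)*d - d*(a*c)*(e*b) + d*(e*b)*(a*c) + (e*b)*(a*c)*d - (e*b)*d*(a*c))) +
        (-2:ℤ) • ((a*(c*e*b)*d - a*d*(c*e*b) - (c*e*b)*a*d + (c*e*b)*d*a + d*a*(c*e*b) - d*(c*e*b)*a)) +
        (-2:ℤ) • ((a*(c*e)*(d*b) - a*(d*b)*(c*e) - (c*e)*a*(d*b) + (c*e)*(d*b)*a + (d*b)*a*(c*e) - (d*b)*(c*e)*a)) +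
        (-2:ℤ) • (((a*d)*b*(c*e) - (a*d)*(c*e)*b - b*(a*d)*(c*e) + b*(c*e)*(a*d) + (c*e)*(a*d)*b - (c*e)*b*(a*d))) +
        (1:ℤ) • (((a*d)*b*c - (a*d)*c*b - b*(a*d)*c + b*c*(a*d) + c*(a*d)*b - c*b*(a*d))*e) +
        (1:ℤ) • (((a*d)*(b*e)*c - (a*d)*c*(b*e) - (b*e)*(a*d)*c + (b*e)*c*(a*d) + c*(a*d)*(b*e) - c*(b*e)*(a*d))) := by
      noncomm_ring
    rw [key]
    simp only [h, mul_zero, zero_mul, smul_zero, add_zero, zero_add]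
  · rw [← sub_eq_zero]
    apply hz
    have key : (6:ℤ) • (a*b*c*d*e - a*c*b*d*e) =
        (1:ℤ) • (((d*e)*c*(a*b) - (d*e)*(a*b)*c - c*(d*e)*(a*b) + c*(a*b)*(d*e) + (a*b)*(d*e)*c - (a*b)*c*(d*e))) +
        (-1:ℤ) • (((d*e)*(b*c)*a - (d*e)*a*(b*c) - (b*c)*(d*e)*a + (b*c)*a*(d*e) + a*(d*e)*(b*c) - a*(b*c)*(d*e))) +
        (-1:ℤ) • (((c*d*e)*b*a - (c*d*e)*a*b - b*(c*d*e)*a + b*a*(c*d*e) + a*(c*d*e)*b - a*b*(c*d*e))) +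
        (1:ℤ) • (a*((d*e)*c*b - (d*e)*b*c - c*(d*e)*b + c*b*(d*e) + b*(d*e)*c - b*c*(d*e))) +
        (1:ℤ) • ((a*b)*(e*d*c - e*c*d - d*e*c + d*c*e + c*e*d - c*d*e)) +
        (-2:ℤ) • ((d*(b*c)*a - d*a*(b*c) - (b*c)*d*a + (b*c)*a*d + a*d*(b*c) - a*(b*c)*d)*e) +
        (-2:ℤ) • (a*(d*c*b - d*b*c - c*d*b + c*b*d + b*d*c - b*c*d)*e) +
        (-3:ℤ) • ((c*b*a - c*a*b - b*c*a + b*a*c + a*c*b - a*b*c)*(d*e)) +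
        (2:ℤ) • ((e*d*(b*a*c) - e*(b*a*c)*d - d*e*(b*a*c) + d*(b*a*c)*e + (b*a*c)*e*d - (b*a*c)*d*e)) +
        (-2:ℤ) • ((e*(a*c*d)*b - e*b*(a*c*d) - (a*c*d)*e*b + (a*c*d)*b*e + b*e*(a*c*d) - b*(a*c*d)*e)) +
        (-1:ℤ) • (((d*e)*c*(b*a) - (d*e)*(b*a)*c - c*(d*e)*(b*a) + c*(b*a)*(d*e) + (b*a)*(d*e)*c - (b*a)*c*(d*e))) +
        (-1:ℤ) • (((d*e)*(a*c)*b - (d*e)*b*(a*c) - (a*c)*(d*e)*b + (a*c)*b*(d*e) + b*(d*e)*(a*c) - b*(a*c)*(d*e))) +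
        (-4:ℤ) • (b*(e*d*(a*c) - e*(a*c)*d - d*e*(a*c) + d*(a*c)*e + (a*c)*e*d - (a*c)*d*e)) +
        (2:ℤ) • (b*((d*e)*c*a - (d*e)*a*c - c*(d*e)*a + c*a*(d*e) + a*(d*e)*c - a*c*(d*e))) +
        (-2:ℤ) • ((d*c*(b*a) - d*(b*a)*c - c*d*(b*a) + c*(b*a)*d + (b*a)*d*c - (b*a)*c*d)*e) +
        (2:ℤ) • (b*(d*c*a - d*a*c - c*d*a + c*a*d + a*d*c - a*c*d)*e) +
        (-2:ℤ) • ((e*d*(a*c*b) - e*(a*c*b)*d - d*e*(a*c*b) + d*(a*c*b)*e + (a*c*b)*e*d - (a*c*b)*d*e)) +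
        (2:ℤ) • ((e*(b*d)*(a*c) - e*(a*c)*(b*d) - (b*d)*e*(a*c) + (b*d)*(a*c)*e + (a*c)*e*(b*d) - (a*c)*(b*d)*e)) +
        (1:ℤ) • (((d*e)*(c*b)*a - (d*e)*a*(c*b) - (c*b)*(d*e)*a + (c*b)*a*(d*e) + a*(d*e)*(c*b) - a*(c*b)*(d*e))) +
        (-1:ℤ) • (((b*d*e)*c*a - (b*d*e)*a*c - c*(b*d*e)*a + c*a*(b*d*e) + a*(b*d*e)*c - a*c*(b*d*e))) +
        (1:ℤ) • ((a*c)*(e*d*b - e*b*d - d*e*b + d*b*e + b*e*d - b*d*e)) +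
        (2:ℤ) • ((d*(c*b)*a - d*a*(c*b) - (c*b)*d*a + (c*b)*a*d + a*d*(c*b) - a*(c*b)*d)*e) +
        (-2:ℤ) • (((b*d)*c*a - (b*d)*a*c - c*(b*d)*a + c*a*(b*d) + a*(b*d)*c - a*c*(b*d))*e) +
        (1:ℤ) • (((d*e)*b*(c*a) - (d*e)*(c*a)*b - b*(d*e)*(c*a) + b*(c*a)*(d*e) + (c*a)*(d*e)*b - (c*a)*b*(d*e))) +
        (-2:ℤ) • ((e*(a*d)*(b*c) - e*(b*c)*(a*d) - (a*d)*e*(b*c) + (a*d)*(b*c)*e + (b*c)*e*(a*d) - (b*c)*(a*d)*e)) +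
        (2:ℤ) • ((e*(c*a*d)*b - e*b*(c*a*d) - (c*a*d)*e*b + (c*a*d)*b*e + b*e*(c*a*d) - b*(c*a*d)*e)) +
        (3:ℤ) • (b*(e*(a*d)*c - e*c*(a*d) - (a*d)*e*c + (a*d)*c*e + c*e*(a*d) - c*(a*d)*e)) +
        (2:ℤ) • (((a*d)*c*b - (a*d)*b*c - c*(a*d)*b + c*b*(a*d) + b*(a*d)*c - b*c*(a*d))*e) +
        (2:ℤ) • ((e*(a*d)*(c*b) - e*(c*b)*(a*d) - (a*d)*e*(c*b) + (a*d)*(c*b)*e + (c*b)*e*(a*d) - (c*b)*(a*d)*e)) +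
        (-2:ℤ) • ((e*(b*a*d)*c - e*c*(b*a*d) - (b*a*d)*e*c + (b*a*d)*c*e + c*e*(b*a*d) - c*(b*a*d)*e)) +
        (-1:ℤ) • (c*(e*(a*d)*b - e*b*(a*d) - (a*d)*e*b + (a*d)*b*e + b*e*(a*d) - b*(a*d)*e)) +
        (2:ℤ) • (((c*e)*d*(a*b) - (c*e)*(a*b)*d - d*(c*e)*(a*b) + d*(a*b)*(c*e) + (a*b)*(c*e)*d - (a*b)*d*(c*e))) +
        (-2:ℤ) • (((c*e)*(b*d)*a - (c*e)*a*(b*d) - (b*d)*(c*e)*a + (b*d)*a*(c*e) + a*(c*e)*(b*d) - a*(b*d)*(c*e))) +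
        (-2:ℤ) • (((d*c*e)*b*a - (d*c*e)*a*b - b*(d*c*e)*a + b*a*(d*c*e) + a*(d*c*e)*b - a*b*(d*c*e))) +
        (-1:ℤ) • (a*((c*e)*d*b - (c*e)*b*d - d*(c*e)*b + d*b*(c*e) + b*(c*e)*d - b*d*(c*e))) +
        (-2:ℤ) • ((e*(a*d*c)*b - e*b*(a*d*c) - (a*d*c)*e*b + (a*d*c)*b*e + b*e*(a*d*c) - b*(a*d*c)*e)) +
        (-2:ℤ) • (((c*e)*d*(b*a) - (c*e)*(b*a)*d - d*(c*e)*(b*a) + d*(b*a)*(c*e) + (b*a)*(c*e)*d - (b*a)*d*(c*e))) +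
        (1:ℤ) • (((c*e)*(a*d)*b - (c*e)*b*(a*d) - (a*d)*(c*e)*b + (a*d)*b*(c*e) + b*(c*e)*(a*d) - b*(a*d)*(c*e))) +
        (4:ℤ) • (b*((c*e)*d*a - (c*e)*a*d - d*(c*e)*a + d*a*(c*e) + a*(c*e)*d - a*d*(c*e))) +
        (-2:ℤ) • ((e*c*(a*d*b) - e*(a*d*b)*c - c*e*(a*d*b) + c*(a*d*b)*e + (a*d*b)*e*c - (a*d*b)*c*e)) +
        (2:ℤ) • (((c*e)*(d*b)*a - (c*e)*a*(d*b) - (d*b)*(c*e)*a + (d*b)*a*(c*e) + a*(c*e)*(d*b) - a*(d*b)*(c*e))) +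
        (-2:ℤ) • (((b*c*e)*d*a - (b*c*e)*a*d - d*(b*c*e)*a + d*a*(b*c*e) + a*(b*c*e)*d - a*d*(b*c*e))) +
        (-2:ℤ) • ((c*(d*b)*a - c*a*(d*b) - (d*b)*c*a + (d*b)*a*c + a*c*(d*b) - a*(d*b)*c)*e) +
        (2:ℤ) • (((c*e)*b*(d*a) - (c*e)*(d*a)*b - b*(c*e)*(d*a) + b*(d*a)*(c*e) + (d*a)*(c*e)*b - (d*a)*b*(c*e))) +
        (2:ℤ) • ((e*(d*a*c)*b - e*b*(d*a*c) - (d*a*c)*e*b + (d*a*c)*b*e + b*e*(d*a*c) - b*(d*a*c)*e)) +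
        (2:ℤ) • ((e*(a*c)*(d*b) - e*(d*b)*(a*c) - (a*c)*e*(d*b) + (a*c)*(d*b)*e + (d*b)*e*(a*c) - (d*b)*(a*c)*e)) +
        (2:ℤ) • (((b*e)*d*(a*c) - (b*e)*(a*c)*d - d*(b*e)*(a*c) + d*(a*c)*(b*e) + (a*c)*(b*e)*d - (a*c)*d*(b*e))) +
        (-1:ℤ) • (a*((b*e)*d*c - (b*e)*c*d - d*(b*e)*c + d*c*(b*e) + c*(b*e)*d - c*d*(b*e))) +
        (-1:ℤ) • (((b*e)*(a*d)*c - (b*e)*c*(a*d) - (a*d)*(b*e)*c + (a*d)*c*(b*e) + c*(b*e)*(a*d) - c*(a*d)*(b*e))) := by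
      noncomm_ring
    rw [key]
    simp only [h, mul_zero, zero_mul, smul_zero, add_zero, zero_add]
end

section
/- Let A be an associative algebra over a field of characteristic 0 satisfying the second-type identity abc - acb - bac + bca + cab - cba = 0. Then for all a,b,c,d,e in A: abcde = abced - bcaed + bcade. -/
set_option maxHeartbeats 4000000


theorem second_type_deg5_rewrite {K A : Type*} [Field K] [CharZero K]
    [NonUnitalRing A] [Module K A] [IsScalarTower K A A] [SMulCommClass K A A]
    (h : ∀ a b c : A,
      a*b*c - a*c*b - b*a*c + b*c*a + c*a*b - c*b*a = 0) :
    ∀ a b c d e : A,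
      a*b*c*d*e = a*b*c*e*d - b*c*a*e*d + b*c*a*d*e := by
  intro a b c d e
  have key : ∀ x y : A, (6 : ℤ) • x - (6 : ℤ) • y = 0 → x = y := by
    intro x y hxy
    have h6 : (6 : K) • x = (6 : K) • y := by
      have hx : ((6 : ℤ) : K) • x = (6 : ℤ) • x := Int.cast_smul_eq_zsmul K 6 x
      have hy : ((6 : ℤ) : K) • y = (6 : ℤ) • y := Int.cast_smul_eq_zsmul K 6 y
      have : (6 : ℤ) • x = (6 : ℤ) • y := sub_eq_zero.mp hxy
      push_cast at hx hy
      rw [hx, hy]; exact this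
    have h2 := congrArg (fun z => (6 : K)⁻¹ • z) h6
    simpa [smul_smul, inv_mul_cancel₀ (show (6:K) ≠ 0 by norm_num)] using h2
  apply key
  have expand : (6 : ℤ) • (a*b*c*d*e) - (6 : ℤ) • (a*b*c*e*d - b*c*a*e*d + b*c*a*d*e) =
      (1 : ℤ) • ((a*b*c - a*c*b - b*a*c + b*c*a + c*a*b - c*b*a) * (d*e)) +
      (3 : ℤ) • ((a*b*(c*d) - a*(c*d)*b - b*a*(c*d) + b*(c*d)*a + (c*d)*a*b - (c*d)*b*a) * e) +
      (-3 : ℤ) • ((a*(b*c)*d - a*d*(b*c) - (b*c)*a*d + (b*c)*d*a + d*a*(b*c) - d*(b*c)*a) * e) +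
      (2 : ℤ) • (((a*b)*c*d - (a*b)*d*c - c*(a*b)*d + c*d*(a*b) + d*(a*b)*c - d*c*(a*b)) * e) +
      (5 : ℤ) • (((a*b*c)*d*e - (a*b*c)*e*d - d*(a*b*c)*e + d*e*(a*b*c) + e*(a*b*c)*d - e*d*(a*b*c))) +
      (-7 : ℤ) • (a * (b*c*d - b*d*c - c*b*d + c*d*b + d*b*c - d*c*b) * e) +
      (9 : ℤ) • (a * (b*c*(d*e) - b*(d*e)*c - c*b*(d*e) + c*(d*e)*b + (d*e)*b*c - (d*e)*c*b)) +
      (1 : ℤ) • (a * (b*(c*d)*e - b*e*(c*d) - (c*d)*b*e + (c*d)*e*b + e*b*(c*d) - e*(c*d)*b)) +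
      (-7 : ℤ) • (a * ((b*c)*d*e - (b*c)*e*d - d*(b*c)*e + d*e*(b*c) + e*(b*c)*d - e*d*(b*c))) +
      (2 : ℤ) • ((a*b) * (c*d*e - c*e*d - d*c*e + d*e*c + e*c*d - e*d*c)) +
      (-3 : ℤ) • ((a*b*c - a*c*b - b*a*c + b*c*a + c*a*b - c*b*a) * (e*d)) +
      (3 : ℤ) • ((a*b*(c*e) - a*(c*e)*b - b*a*(c*e) + b*(c*e)*a + (c*e)*a*b - (c*e)*b*a) * d) +
      (-6 : ℤ) • ((a*(b*c)*e - a*e*(b*c) - (b*c)*a*e + (b*c)*e*a + e*a*(b*c) - e*(b*c)*a) * d) +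
      (3 : ℤ) • (((a*b)*c*e - (a*b)*e*c - c*(a*b)*e + c*e*(a*b) + e*(a*b)*c - e*c*(a*b)) * d) +
      (-3 : ℤ) • ((a*(b*c)*(e*d) - a*(e*d)*(b*c) - (b*c)*a*(e*d) + (b*c)*(e*d)*a + (e*d)*a*(b*c) - (e*d)*(b*c)*a)) +
      (3 : ℤ) • ((a*(b*c*e)*d - a*d*(b*c*e) - (b*c*e)*a*d + (b*c*e)*d*a + d*a*(b*c*e) - d*(b*c*e)*a)) +
      (-1 : ℤ) • (((a*b)*c*(e*d) - (a*b)*(e*d)*c - c*(a*b)*(e*d) + c*(e*d)*(a*b) + (e*d)*(a*b)*c - (e*d)*c*(a*b))) +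
      (5 : ℤ) • (((a*b)*(c*e)*d - (a*b)*d*(c*e) - (c*e)*(a*b)*d + (c*e)*d*(a*b) + d*(a*b)*(c*e) - d*(c*e)*(a*b))) +
      (-2 : ℤ) • (a * (b*c*e - b*e*c - c*b*e + c*e*b + e*b*c - e*c*b) * d) +
      (-3 : ℤ) • (a * (b*c*(e*d) - b*(e*d)*c - c*b*(e*d) + c*(e*d)*b + (e*d)*b*c - (e*d)*c*b)) +
      (-2 : ℤ) • (a * (b*(c*e)*d - b*d*(c*e) - (c*e)*b*d + (c*e)*d*b + d*b*(c*e) - d*(c*e)*b)) +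
      (-2 : ℤ) • ((a*b*d - a*d*b - b*a*d + b*d*a + d*a*b - d*b*a) * (c*e)) +
      (3 : ℤ) • ((a*b*(d*c) - a*(d*c)*b - b*a*(d*c) + b*(d*c)*a + (d*c)*a*b - (d*c)*b*a) * e) +
      (-3 : ℤ) • ((a*(b*d)*c - a*c*(b*d) - (b*d)*a*c + (b*d)*c*a + c*a*(b*d) - c*(b*d)*a) * e) +
      (3 : ℤ) • (((a*b)*(d*c)*e - (a*b)*e*(d*c) - (d*c)*(a*b)*e + (d*c)*e*(a*b) + e*(a*b)*(d*c) - e*(d*c)*(a*b))) +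
      (-1 : ℤ) • (((a*b*d)*c*e - (a*b*d)*e*c - c*(a*b*d)*e + c*e*(a*b*d) + e*(a*b*d)*c - e*c*(a*b*d))) +
      (-2 : ℤ) • (a * (b*(d*c)*e - b*e*(d*c) - (d*c)*b*e + (d*c)*e*b + e*b*(d*c) - e*(d*c)*b)) +
      (2 : ℤ) • (a * ((b*d)*c*e - (b*d)*e*c - c*(b*d)*e + c*e*(b*d) + e*(b*d)*c - e*c*(b*d))) +
      (4 : ℤ) • ((a*b*d - a*d*b - b*a*d + b*d*a + d*a*b - d*b*a) * (e*c)) +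
      (-1 : ℤ) • ((a*b*(d*e) - a*(d*e)*b - b*a*(d*e) + b*(d*e)*a + (d*e)*a*b - (d*e)*b*a) * c) +
      (7 : ℤ) • ((a*(b*d)*e - a*e*(b*d) - (b*d)*a*e + (b*d)*e*a + e*a*(b*d) - e*(b*d)*a) * c) +
      (-4 : ℤ) • (((a*b)*d*e - (a*b)*e*d - d*(a*b)*e + d*e*(a*b) + e*(a*b)*d - e*d*(a*b)) * c) +
      (-3 : ℤ) • ((a*(b*d)*(e*c) - a*(e*c)*(b*d) - (b*d)*a*(e*c) + (b*d)*(e*c)*a + (e*c)*a*(b*d) - (e*c)*(b*d)*a)) +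
      (3 : ℤ) • ((a*(b*d*e)*c - a*c*(b*d*e) - (b*d*e)*a*c + (b*d*e)*c*a + c*a*(b*d*e) - c*(b*d*e)*a)) +
      (2 : ℤ) • (a * (b*d*e - b*e*d - d*b*e + d*e*b + e*b*d - e*d*b) * c) +
      (-2 : ℤ) • ((a*b*e - a*e*b - b*a*e + b*e*a + e*a*b - e*b*a) * (c*d)) +
      (5 : ℤ) • ((a*b*(e*c) - a*(e*c)*b - b*a*(e*c) + b*(e*c)*a + (e*c)*a*b - (e*c)*b*a) * d) +
      (-3 : ℤ) • ((a*(b*e)*c - a*c*(b*e) - (b*e)*a*c + (b*e)*c*a + c*a*(b*e) - c*(b*e)*a) * d) +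
      (-5 : ℤ) • (((a*b*e)*c*d - (a*b*e)*d*c - c*(a*b*e)*d + c*d*(a*b*e) + d*(a*b*e)*c - d*c*(a*b*e))) +
      (5 : ℤ) • (a * ((b*e)*c*d - (b*e)*d*c - c*(b*e)*d + c*d*(b*e) + d*(b*e)*c - d*c*(b*e))) +
      (-5 : ℤ) • ((a*b*e - a*e*b - b*a*e + b*e*a + e*a*b - e*b*a) * (d*c)) +
      (5 : ℤ) • ((a*b*(e*d) - a*(e*d)*b - b*a*(e*d) + b*(e*d)*a + (e*d)*a*b - (e*d)*b*a) * c) +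
      (-3 : ℤ) • ((a*(b*e)*d - a*d*(b*e) - (b*e)*a*d + (b*e)*d*a + d*a*(b*e) - d*(b*e)*a) * c) +
      (-3 : ℤ) • ((a*(b*e)*(d*c) - a*(d*c)*(b*e) - (b*e)*a*(d*c) + (b*e)*(d*c)*a + (d*c)*a*(b*e) - (d*c)*(b*e)*a)) +
      (3 : ℤ) • ((a*(b*e*d)*c - a*c*(b*e*d) - (b*e*d)*a*c + (b*e*d)*c*a + c*a*(b*e*d) - c*(b*e*d)*a)) +
      (-3 : ℤ) • (((a*c)*b*d - (a*c)*d*b - b*(a*c)*d + b*d*(a*c) + d*(a*c)*b - d*b*(a*c)) * e) +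
      (3 : ℤ) • ((a*(c*b*d)*e - a*e*(c*b*d) - (c*b*d)*a*e + (c*b*d)*e*a + e*a*(c*b*d) - e*(c*b*d)*a)) +
      (4 : ℤ) • (((a*c)*b*(d*e) - (a*c)*(d*e)*b - b*(a*c)*(d*e) + b*(d*e)*(a*c) + (d*e)*(a*c)*b - (d*e)*b*(a*c))) +
      (-7 : ℤ) • (((a*c)*(b*d)*e - (a*c)*e*(b*d) - (b*d)*(a*c)*e + (b*d)*e*(a*c) + e*(a*c)*(b*d) - e*(b*d)*(a*c))) +
      (3 : ℤ) • (((a*c*b)*d*e - (a*c*b)*e*d - d*(a*c*b)*e + d*e*(a*c*b) + e*(a*c*b)*d - e*d*(a*c*b))) +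
      (5 : ℤ) • (a * ((c*b)*d*e - (c*b)*e*d - d*(c*b)*e + d*e*(c*b) + e*(c*b)*d - e*d*(c*b))) +
      (1 : ℤ) • (((a*c)*b*e - (a*c)*e*b - b*(a*c)*e + b*e*(a*c) + e*(a*c)*b - e*b*(a*c)) * d) +
      (3 : ℤ) • ((a*(c*b*e)*d - a*d*(c*b*e) - (c*b*e)*a*d + (c*b*e)*d*a + d*a*(c*b*e) - d*(c*b*e)*a)) +
      (-2 : ℤ) • (((a*c)*b*(e*d) - (a*c)*(e*d)*b - b*(a*c)*(e*d) + b*(e*d)*(a*c) + (e*d)*(a*c)*b - (e*d)*b*(a*c))) +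
      (3 : ℤ) • (((a*c)*(b*e)*d - (a*c)*d*(b*e) - (b*e)*(a*c)*d + (b*e)*d*(a*c) + d*(a*c)*(b*e) - d*(b*e)*(a*c))) +
      (4 : ℤ) • (((a*c)*(d*b)*e - (a*c)*e*(d*b) - (d*b)*(a*c)*e + (d*b)*e*(a*c) + e*(a*c)*(d*b) - e*(d*b)*(a*c))) +
      (1 : ℤ) • (((a*c*d)*b*e - (a*c*d)*e*b - b*(a*c*d)*e + b*e*(a*c*d) + e*(a*c*d)*b - e*b*(a*c*d))) +
      (1 : ℤ) • (a * (c*(d*b)*e - c*e*(d*b) - (d*b)*c*e + (d*b)*e*c + e*c*(d*b) - e*(d*b)*c)) +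
      (-7 : ℤ) • (((a*c)*d*e - (a*c)*e*d - d*(a*c)*e + d*e*(a*c) + e*(a*c)*d - e*d*(a*c)) * b) +
      (2 : ℤ) • (a * (c*d*e - c*e*d - d*c*e + d*e*c + e*c*d - e*d*c) * b) +
      (-5 : ℤ) • (((a*c*e)*b*d - (a*c*e)*d*b - b*(a*c*e)*d + b*d*(a*c*e) + d*(a*c*e)*b - d*b*(a*c*e))) +
      (2 : ℤ) • ((a*c*e - a*e*c - c*a*e + c*e*a + e*a*c - e*c*a) * (d*b)) +
      (-2 : ℤ) • ((a*c*(e*d) - a*(e*d)*c - c*a*(e*d) + c*(e*d)*a + (e*d)*a*c - (e*d)*c*a) * b) +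
      (-2 : ℤ) • ((a*(c*e)*d - a*d*(c*e) - (c*e)*a*d + (c*e)*d*a + d*a*(c*e) - d*(c*e)*a) * b) +
      (-4 : ℤ) • (((a*d)*b*c - (a*d)*c*b - b*(a*d)*c + b*c*(a*d) + c*(a*d)*b - c*b*(a*d)) * e) +
      (3 : ℤ) • ((a*(d*b*c)*e - a*e*(d*b*c) - (d*b*c)*a*e + (d*b*c)*e*a + e*a*(d*b*c) - e*(d*b*c)*a)) +
      (6 : ℤ) • (((a*d)*(b*c)*e - (a*d)*e*(b*c) - (b*c)*(a*d)*e + (b*c)*e*(a*d) + e*(a*d)*(b*c) - e*(b*c)*(a*d))) +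
      (-4 : ℤ) • (((a*d*b)*c*e - (a*d*b)*e*c - c*(a*d*b)*e + c*e*(a*d*b) + e*(a*d*b)*c - e*c*(a*d*b))) +
      (-4 : ℤ) • ((a*(d*b)*e - a*e*(d*b) - (d*b)*a*e + (d*b)*e*a + e*a*(d*b) - e*(d*b)*a) * c) +
      (-1 : ℤ) • (((a*d)*b*e - (a*d)*e*b - b*(a*d)*e + b*e*(a*d) + e*(a*d)*b - e*b*(a*d)) * c) +
      (-2 : ℤ) • (((a*d)*b*(e*c) - (a*d)*(e*c)*b - b*(a*d)*(e*c) + b*(e*c)*(a*d) + (e*c)*(a*d)*b - (e*c)*b*(a*d))) +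
      (3 : ℤ) • (((b*a)*c*d - (b*a)*d*c - c*(b*a)*d + c*d*(b*a) + d*(b*a)*c - d*c*(b*a)) * e) +
      (3 : ℤ) • (((b*a*c)*d*e - (b*a*c)*e*d - d*(b*a*c)*e + d*e*(b*a*c) + e*(b*a*c)*d - e*d*(b*a*c))) +
      (-3 : ℤ) • (((b*a)*c*e - (b*a)*e*c - c*(b*a)*e + c*e*(b*a) + e*(b*a)*c - e*c*(b*a)) * d) +
      (6 : ℤ) • (((b*a)*c*(e*d) - (b*a)*(e*d)*c - c*(b*a)*(e*d) + c*(e*d)*(b*a) + (e*d)*(b*a)*c - (e*d)*c*(b*a))) +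
      (-6 : ℤ) • (((b*a)*(c*e)*d - (b*a)*d*(c*e) - (c*e)*(b*a)*d + (c*e)*d*(b*a) + d*(b*a)*(c*e) - d*(c*e)*(b*a))) +
      (-6 : ℤ) • (((b*a)*(d*c)*e - (b*a)*e*(d*c) - (d*c)*(b*a)*e + (d*c)*e*(b*a) + e*(b*a)*(d*c) - e*(d*c)*(b*a))) := by
    noncomm_ring
  simp only [h, mul_zero, zero_mul, smul_zero, add_zero, zero_add] at expand
  exact expand
end

section
/- Let A be an associative algebra over a field of characteristic 0 satisfying the second-type identity. Then any product of n ≥ 5 elements depends only on its first factor, its last factor, and the multiset of its middle factors; i.e., if two products of length n ≥ 5 have the same first element, same last element, and their middle factors are a permutation of each other, the products are equal. -/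
theorem second_type_middle_perm {K A : Type*} [Field K] [CharZero K]
    [NonUnitalRing A] [Module K A] [IsScalarTower K A A] [SMulCommClass K A A]
    (h : ∀ a b c : A,
      a*b*c - a*c*b - b*a*c + b*c*a + c*a*b - c*b*a = 0) :
    ∀ (a e : A) (m₁ m₂ : List A), 3 ≤ m₁.length → m₁.Perm m₂ →
      (m₁ ++ [e]).foldl (· * ·) a = (m₂ ++ [e]).foldl (· * ·) a := by
  -- Degree-4 consequence: x[y,z]w + w[y,z]x = 0
  have hS : ∀ x y z w : A, x*(y*z-z*y)*w + w*(y*z-z*y)*x = 0 := by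
    intro x y z w
    linear_combination (norm := (simp only [mul_add, mul_sub, add_mul, sub_mul, mul_assoc,
        smul_add, smul_sub, mul_smul_comm, smul_mul_assoc, smul_smul, zero_mul, mul_zero,
        smul_zero, sub_zero, zero_add, add_zero, neg_zero]; module))
      ((1:K)/2) • ((h x w y) * z)
      + (-1:ℤ) • (h x w (y*z))
      + ((-1:K)/2) • ((h x w z) * y)
      + (h x w (z*y))
      + ((1:K)/2) • (h x (w*y) z)
      + ((-1:K)/2) • (h x (w*z) y)
      + ((-1:K)/2) • ((h y w z) * x)
      + ((-1:K)/2) • (h y w (z*x))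
      + (h y (w*x) z)
      + ((-1:K)/2) • (h (y*x) w z)
      + ((1:K)/2) • (y * (h x w z))
      + ((-1:K)/2) • (z * (h x w y))
      + ((-1:K)/2) • (w * (h x z y))
  -- Degree-5 consequence: (p*q)[x,y]r = 0
  have hLA : ∀ p q x y r : A, p*q*(x*y-y*x)*r = 0 := by
    intro p q x y r
    linear_combination (norm := (simp only [mul_add, mul_sub, add_mul, sub_mul, mul_assoc,
        smul_add, smul_sub, mul_smul_comm, smul_mul_assoc, smul_smul, zero_mul, mul_zero,
        smul_zero, sub_zero, zero_add, add_zero, neg_zero]; module))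
        ((1:K)/12) • ((hS p q x y) * r)
        + ((1:K)/6) • ((hS p q x r) * y)
        + ((-1:K)/12) • (hS p q x (r*y))
        + ((1:K)/12) • (hS p q (x*y) r)
        + ((1:K)/12) • (hS p q (x*r) y)
        + ((-1:K)/12) • ((hS p q y x) * r)
        + ((-1:K)/12) • (hS p q y (r*x))
        + ((-1:K)/12) • (hS p q (y*x) r)
        + ((-1:K)/12) • (hS p q (y*r) x)
        + ((1:K)/12) • ((hS p q r y) * x)
        + ((-1:K)/12) • (hS p q (r*x) y)
        + ((1:K)/12) • (hS p q (r*y) x)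
        + ((-1:K)/6) • (hS p (q*x) r y)
        + ((1:K)/4) • ((hS p x y q) * r)
        + ((1:K)/12) • (hS p x y (q*r))
        + ((-1:K)/6) • ((hS p x y r) * q)
        + ((-1:K)/6) • (hS p x (y*q) r)
        + ((-1:K)/12) • (hS p x (y*r) q)
        + ((1:K)/12) • ((hS p x r q) * y)
        + ((1:K)/12) • (hS p x r (q*y))
        + ((1:K)/12) • ((hS p x r y) * q)
        + ((-1:K)/12) • (hS p x (r*y) q)
        + ((1:K)/12) • (hS p (x*y) r q)
        + ((1:K)/12) • (hS p (x*r) y q)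
        + ((-1:K)/6) • ((hS p y r q) * x)
        + ((-1:K)/4) • ((hS p y r x) * q)
        + ((1:K)/12) • (hS p y r (x*q))
        + ((-1:K)/12) • ((hS p r q x) * y)
        + ((-1:K)/12) • (hS p r x (y*q))
        + ((7:K)/12) • (hS (p*q) x y r)
        + ((1:K)/4) • (hS (p*q) x r y)
        + ((1:K)/6) • (hS (p*q) y r x)
        + ((1:K)/6) • (hS (p*x) y r q)
        + ((-1:K)/4) • (hS (p*y) q x r)
        + ((-1:K)/6) • (hS (p*y) q r x)
        + ((1:K)/6) • (hS (p*y) x r q)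
        + ((-1:K)/12) • (hS (p*r) q x y)
        + ((-1:K)/12) • ((hS q p x y) * r)
        + ((-1:K)/12) • (hS q p x (y*r))
        + ((-1:K)/6) • (hS q p x (r*y))
        + ((1:K)/6) • (hS q p (x*y) r)
        + ((1:K)/6) • (hS q p (x*r) y)
        + ((1:K)/6) • (hS q p y (x*r))
        + ((-1:K)/12) • ((hS q p y r) * x)
        + ((1:K)/4) • (hS q p y (r*x))
        + ((-1:K)/4) • (hS q p (y*x) r)
        + ((-1:K)/12) • (hS q p (y*r) x)
        + ((1:K)/12) • ((hS q p r x) * y)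
        + ((-1:K)/12) • ((hS q p r y) * x)
        + ((1:K)/6) • (hS q p r (y*x))
        + ((-1:K)/4) • (hS q p (r*x) y)
        + ((-1:K)/12) • (hS q p (r*y) x)
        + ((-1:K)/6) • (hS q (p*x) y r)
        + ((-1:K)/12) • (hS q (p*x) r y)
        + ((1:K)/4) • (hS q (p*y) x r)
        + ((1:K)/4) • (hS q (p*r) x y)
        + ((-1:K)/12) • (hS q (p*r) y x)
        + ((1:K)/6) • (hS (q*p) x y r)
        + ((1:K)/12) • (hS (q*p) x r y)
        + ((-1:K)/12) • (hS (q*p) y r x)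
        + ((-1:K)/12) • (hS x p q (y*r))
        + ((-1:K)/12) • ((hS x p q r) * y)
        + ((-1:K)/12) • (hS x p (q*y) r)
        + ((-1:K)/12) • (hS x p (q*r) y)
        + ((1:K)/12) • (hS x p y (r*q))
        + ((1:K)/6) • (hS x p r (y*q))
        + ((1:K)/12) • (hS x (p*q) y r)
        + ((1:K)/12) • (hS x (p*y) q r)
        + ((1:K)/12) • (hS x (p*r) q y)
        + ((1:K)/12) • (hS (x*p) q y r)
        + ((1:K)/6) • (hS (x*p) q r y)
        + ((1:K)/12) • (hS y p q (r*x))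
        + ((-1:K)/12) • (hS y p x (r*q))
        + ((1:K)/12) • (hS y (p*q) x r)
        + ((-1:K)/12) • (hS (y*p) q x r)
        + ((1:K)/4) • (p * (hS q x y r))
        + ((1:K)/4) • (p * (hS q r x y))
        + ((-1:K)/12) • (p * (hS x y q r))
        + ((-1:K)/12) • (p * (hS x r q y))
        + ((1:K)/12) • (q * (hS x p y r))
        + ((1:K)/12) • (q * (hS x p r y))
        + ((1:K)/12) • (x * (hS y p q r))
  -- Degree-5 consequence: a[x,y](u*v) = 0
  have hLB : ∀ a x y u v : A, a*(x*y-y*x)*(u*v) = 0 := by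
    intro a x y u v
    have h1 := hS a x y (u*v)
    have h2 := hLA u v x y a
    linear_combination (norm := noncomm_ring) h1 - h2
  -- swapping two adjacent elements after a composite prefix
  have keyA : ∀ (u v x y c : A) (t : List A),
      List.foldl (· * ·) (u*v) (x::y::c::t) = List.foldl (· * ·) (u*v) (y::x::c::t) := by
    intro u v x y c t
    simp only [List.foldl_cons]
    congr 1
    linear_combination (norm := noncomm_ring) hLA u v x y c
  -- swapping two adjacent elements with two elements following
  have keyB : ∀ (a x y r s : A) (t : List A),
      List.foldl (· * ·) a (x::y::r::s::t) = List.foldl (· * ·) a (y::x::r::s::t) := by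
    intro a x y r s t
    simp only [List.foldl_cons]
    congr 1
    linear_combination (norm := noncomm_ring) hLB a x y r s
  have key : ∀ {l₁ l₂ : List A}, l₁.Perm l₂ → ∀ (pre : List A) (a e : A),
      3 ≤ pre.length + l₁.length →
      List.foldl (· * ·) a (pre ++ l₁ ++ [e]) = List.foldl (· * ·) a (pre ++ l₂ ++ [e]) := by
    intro l₁ l₂ hp
    induction hp with
    | nil => intro pre a e _; rfl
    | @cons x l₁' l₂' hp ih =>
        intro pre a e hlen
        rw [show pre ++ x::l₁' ++ [e] = (pre ++ [x]) ++ l₁' ++ [e] by simp,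
            show pre ++ x::l₂' ++ [e] = (pre ++ [x]) ++ l₂' ++ [e] by simp]
        exact ih (pre ++ [x]) a e (by simp at hlen ⊢; omega)
    | swap x y l =>
        intro pre a e hlen
        rcases List.eq_nil_or_concat pre with rfl | ⟨l', t, rfl⟩
        · -- pre is empty: l has length ≥ 1
          simp only [List.length_nil, List.length_cons, Nat.zero_add] at hlen
          rcases l with _ | ⟨c, l'⟩
          · have : ([] : List A).length = 0 := rfl
            omega
          · rcases hl : l' ++ [e] with _ | ⟨d, tl⟩
            · simp at hl
            · simp only [List.nil_append, List.cons_append, hl]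
              exact keyB a y x c d tl
        · -- pre ends with t: composite prefix
          simp only [List.concat_eq_append] at hlen ⊢
          have hfold : ∀ rest : List A, List.foldl (· * ·) a ((l' ++ [t]) ++ rest)
              = List.foldl (· * ·) (List.foldl (· * ·) a l' * t) rest := by
            intro rest
            rw [List.foldl_append, List.foldl_append, List.foldl_cons, List.foldl_nil]
          rw [show (l' ++ [t]) ++ (y::x::l) ++ [e] = (l' ++ [t]) ++ (y::x::(l ++ [e])) by simp,
              show (l' ++ [t]) ++ (x::y::l) ++ [e] = (l' ++ [t]) ++ (x::y::(l ++ [e])) by simp,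
              hfold, hfold]
          rcases hl : l ++ [e] with _ | ⟨c, tl⟩
          · simp at hl
          · exact keyA (List.foldl (· * ·) a l') t y x c tl
    | trans h₁ h₂ ih₁ ih₂ =>
        intro pre a e hlen
        refine (ih₁ pre a e hlen).trans (ih₂ pre a e ?_)
        rwa [← h₁.length_eq]
  intro a e m₁ m₂ hlen hperm
  exact key hperm [] a e (by simpa using hlen)
end

section
/- Let A be an associative algebra over a field of characteristic 0 satisfying the second-type identity, and let x₁,...,x₅ ∈ A. With (a,e) denoting the multilinear product of the five elements starting at a and ending at e, the fully symmetrized product satisfies ∑_{σ ∈ S₅} x_{σ(1)}x_{σ(2)}x_{σ(3)}x_{σ(4)}x_{σ(5)} = 6·∑_{i ≠ j} (xᵢ,xⱼ). -/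
set_option maxHeartbeats 4000000

private lemma pse {M : Type*} [AddCommMonoid M] {n : ℕ} (f : Equiv.Perm (Fin (n+1)) → M) :
    ∑ σ, f σ = ∑ p : Fin (n+1), ∑ e : Equiv.Perm (Fin n), f (Equiv.Perm.decomposeFin.symm (p, e)) := by
  rw [← Equiv.sum_comp Equiv.Perm.decomposeFin.symm f, Fintype.sum_prod_type]

private lemma perm_sum_5 {M : Type*} [AddCommMonoid M] (f : Equiv.Perm (Fin 5) → M) :
    ∑ σ, f σ = ∑ p : Fin 5, ∑ e : Equiv.Perm (Fin 4), f (Equiv.Perm.decomposeFin.symm (p, e)) := pse f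

private lemma perm_sum_4 {M : Type*} [AddCommMonoid M] (f : Equiv.Perm (Fin 4) → M) :
    ∑ σ, f σ = ∑ p : Fin 4, ∑ e : Equiv.Perm (Fin 3), f (Equiv.Perm.decomposeFin.symm (p, e)) := pse f

private lemma perm_sum_3 {M : Type*} [AddCommMonoid M] (f : Equiv.Perm (Fin 3) → M) :
    ∑ σ, f σ = ∑ p : Fin 3, ∑ e : Equiv.Perm (Fin 2), f (Equiv.Perm.decomposeFin.symm (p, e)) := pse f

private lemma perm_sum_2 {M : Type*} [AddCommMonoid M] (f : Equiv.Perm (Fin 2) → M) :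
    ∑ σ, f σ = ∑ p : Fin 2, ∑ e : Equiv.Perm (Fin 1), f (Equiv.Perm.decomposeFin.symm (p, e)) := pse f

private lemma perm_sum_one {M : Type*} [AddCommMonoid M] (f : Equiv.Perm (Fin 1) → M) :
    ∑ σ, f σ = f 1 := by
  have : Subsingleton (Equiv.Perm (Fin 1)) := by infer_instance
  exact Fintype.sum_subsingleton f 1

private theorem sixfold {K A : Type*} [Field K] [CharZero K]
    [NonUnitalRing A] [Module K A] [IsScalarTower K A A] [SMulCommClass K A A]
    (h : ∀ a b c : A,
      a*b*c - a*c*b - b*a*c + b*c*a + c*a*b - c*b*a = 0)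
    (a b c d e : A) :
    a*b*c*d*e + a*b*d*c*e + a*c*b*d*e + a*c*d*b*e + a*d*b*c*e + a*d*c*b*e
      = 6 • (a*b*c*d*e) := by
  have key : (a*b*c*d*e + a*b*d*c*e + a*c*b*d*e + a*c*d*b*e + a*d*b*c*e + a*d*c*b*e)
      + (a*b*c*d*e + a*b*d*c*e + a*c*b*d*e + a*c*d*b*e + a*d*b*c*e + a*d*c*b*e)
      = 12 • (a*b*c*d*e) +
      ((-1 : ℤ) • (((a)*(b)*(c) - (a)*(c)*(b) - (b)*(a)*(c) + (b)*(c)*(a) + (c)*(a)*(b) - (c)*(b)*(a)) * (d*e)) +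
      (12 : ℤ) • (((a)*(b)*(c) - (a)*(c)*(b) - (b)*(a)*(c) + (b)*(c)*(a) + (c)*(a)*(b) - (c)*(b)*(a)) * (e*d)) +
      (-6 : ℤ) • (((a)*(b)*(c*d) - (a)*(c*d)*(b) - (b)*(a)*(c*d) + (b)*(c*d)*(a) + (c*d)*(a)*(b) - (c*d)*(b)*(a)) * (e)) +
      (-10 : ℤ) • (((a)*(b)*(c*e) - (a)*(c*e)*(b) - (b)*(a)*(c*e) + (b)*(c*e)*(a) + (c*e)*(a)*(b) - (c*e)*(b)*(a)) * (d)) +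
      (-3 : ℤ) • (((a)*(b)*(d) - (a)*(d)*(b) - (b)*(a)*(d) + (b)*(d)*(a) + (d)*(a)*(b) - (d)*(b)*(a)) * (c*e)) +
      (-2 : ℤ) • (((a)*(b)*(d) - (a)*(d)*(b) - (b)*(a)*(d) + (b)*(d)*(a) + (d)*(a)*(b) - (d)*(b)*(a)) * (e*c)) +
      (-2 : ℤ) • (((a)*(b)*(d*c) - (a)*(d*c)*(b) - (b)*(a)*(d*c) + (b)*(d*c)*(a) + (d*c)*(a)*(b) - (d*c)*(b)*(a)) * (e)) +
      (-4 : ℤ) • (((a)*(b)*(d*c*e) - (a)*(d*c*e)*(b) - (b)*(a)*(d*c*e) + (b)*(d*c*e)*(a) + (d*c*e)*(a)*(b) - (d*c*e)*(b)*(a))) +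
      (4 : ℤ) • (((a)*(b)*(d*e*c) - (a)*(d*e*c)*(b) - (b)*(a)*(d*e*c) + (b)*(d*e*c)*(a) + (d*e*c)*(a)*(b) - (d*e*c)*(b)*(a))) +
      (-2 : ℤ) • (((a)*(b)*(e) - (a)*(e)*(b) - (b)*(a)*(e) + (b)*(e)*(a) + (e)*(a)*(b) - (e)*(b)*(a)) * (c*d)) +
      (2 : ℤ) • (((a)*(b)*(e) - (a)*(e)*(b) - (b)*(a)*(e) + (b)*(e)*(a) + (e)*(a)*(b) - (e)*(b)*(a)) * (d*c)) +
      (6 : ℤ) • (((a)*(b)*(e*c) - (a)*(e*c)*(b) - (b)*(a)*(e*c) + (b)*(e*c)*(a) + (e*c)*(a)*(b) - (e*c)*(b)*(a)) * (d)) +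
      (-4 : ℤ) • (((a)*(b)*(e*c*d) - (a)*(e*c*d)*(b) - (b)*(a)*(e*c*d) + (b)*(e*c*d)*(a) + (e*c*d)*(a)*(b) - (e*c*d)*(b)*(a))) +
      (-6 : ℤ) • (((a)*(b)*(e*d) - (a)*(e*d)*(b) - (b)*(a)*(e*d) + (b)*(e*d)*(a) + (e*d)*(a)*(b) - (e*d)*(b)*(a)) * (c)) +
      (4 : ℤ) • (((a)*(b)*(e*d*c) - (a)*(e*d*c)*(b) - (b)*(a)*(e*d*c) + (b)*(e*d*c)*(a) + (e*d*c)*(a)*(b) - (e*d*c)*(b)*(a))) +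
      (6 : ℤ) • (((a)*(b*c)*(d) - (a)*(d)*(b*c) - (b*c)*(a)*(d) + (b*c)*(d)*(a) + (d)*(a)*(b*c) - (d)*(b*c)*(a)) * (e)) +
      (2 : ℤ) • (((a)*(b*c)*(e) - (a)*(e)*(b*c) - (b*c)*(a)*(e) + (b*c)*(e)*(a) + (e)*(a)*(b*c) - (e)*(b*c)*(a)) * (d)) +
      (10 : ℤ) • (((a)*(b*c)*(e*d) - (a)*(e*d)*(b*c) - (b*c)*(a)*(e*d) + (b*c)*(e*d)*(a) + (e*d)*(a)*(b*c) - (e*d)*(b*c)*(a))) +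
      (-10 : ℤ) • (((a)*(b*c*e)*(d) - (a)*(d)*(b*c*e) - (b*c*e)*(a)*(d) + (b*c*e)*(d)*(a) + (d)*(a)*(b*c*e) - (d)*(b*c*e)*(a))) +
      (-2 : ℤ) • (((a)*(b*d)*(c) - (a)*(c)*(b*d) - (b*d)*(a)*(c) + (b*d)*(c)*(a) + (c)*(a)*(b*d) - (c)*(b*d)*(a)) * (e)) +
      (4 : ℤ) • (((a)*(b*d)*(c*e) - (a)*(c*e)*(b*d) - (b*d)*(a)*(c*e) + (b*d)*(c*e)*(a) + (c*e)*(a)*(b*d) - (c*e)*(b*d)*(a))) +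
      (-2 : ℤ) • (((a)*(b*d)*(e*c) - (a)*(e*c)*(b*d) - (b*d)*(a)*(e*c) + (b*d)*(e*c)*(a) + (e*c)*(a)*(b*d) - (e*c)*(b*d)*(a))) +
      (-2 : ℤ) • (((a)*(b*d*e)*(c) - (a)*(c)*(b*d*e) - (b*d*e)*(a)*(c) + (b*d*e)*(c)*(a) + (c)*(a)*(b*d*e) - (c)*(b*d*e)*(a))) +
      (-6 : ℤ) • (((a)*(b*e)*(c) - (a)*(c)*(b*e) - (b*e)*(a)*(c) + (b*e)*(c)*(a) + (c)*(a)*(b*e) - (c)*(b*e)*(a)) * (d)) +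
      (4 : ℤ) • (((a)*(b*e)*(c*d) - (a)*(c*d)*(b*e) - (b*e)*(a)*(c*d) + (b*e)*(c*d)*(a) + (c*d)*(a)*(b*e) - (c*d)*(b*e)*(a))) +
      (4 : ℤ) • (((a)*(b*e)*(d) - (a)*(d)*(b*e) - (b*e)*(a)*(d) + (b*e)*(d)*(a) + (d)*(a)*(b*e) - (d)*(b*e)*(a)) * (c)) +
      (-2 : ℤ) • (((a)*(b*e)*(d*c) - (a)*(d*c)*(b*e) - (b*e)*(a)*(d*c) + (b*e)*(d*c)*(a) + (d*c)*(a)*(b*e) - (d*c)*(b*e)*(a))) +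
      (-2 : ℤ) • (((a)*(b*e*d)*(c) - (a)*(c)*(b*e*d) - (b*e*d)*(a)*(c) + (b*e*d)*(c)*(a) + (c)*(a)*(b*e*d) - (c)*(b*e*d)*(a))) +
      (-5 : ℤ) • (((a)*(c)*(d) - (a)*(d)*(c) - (c)*(a)*(d) + (c)*(d)*(a) + (d)*(a)*(c) - (d)*(c)*(a)) * (b*e)) +
      (-10 : ℤ) • (((a)*(c)*(e) - (a)*(e)*(c) - (c)*(a)*(e) + (c)*(e)*(a) + (e)*(a)*(c) - (e)*(c)*(a)) * (d*b)) +
      (10 : ℤ) • (((a)*(c)*(e*d) - (a)*(e*d)*(c) - (c)*(a)*(e*d) + (c)*(e*d)*(a) + (e*d)*(a)*(c) - (e*d)*(c)*(a)) * (b)) +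
      (-4 : ℤ) • (((a)*(c*b)*(d*e) - (a)*(d*e)*(c*b) - (c*b)*(a)*(d*e) + (c*b)*(d*e)*(a) + (d*e)*(a)*(c*b) - (d*e)*(c*b)*(a))) +
      (-4 : ℤ) • (((a)*(c*b)*(e) - (a)*(e)*(c*b) - (c*b)*(a)*(e) + (c*b)*(e)*(a) + (e)*(a)*(c*b) - (e)*(c*b)*(a)) * (d)) +
      (-4 : ℤ) • (((a)*(c*b)*(e*d) - (a)*(e*d)*(c*b) - (c*b)*(a)*(e*d) + (c*b)*(e*d)*(a) + (e*d)*(a)*(c*b) - (e*d)*(c*b)*(a))) +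
      (2 : ℤ) • (((a)*(c*b*d)*(e) - (a)*(e)*(c*b*d) - (c*b*d)*(a)*(e) + (c*b*d)*(e)*(a) + (e)*(a)*(c*b*d) - (e)*(c*b*d)*(a))) +
      (2 : ℤ) • (((a)*(c*b*e)*(d) - (a)*(d)*(c*b*e) - (c*b*e)*(a)*(d) + (c*b*e)*(d)*(a) + (d)*(a)*(c*b*e) - (d)*(c*b*e)*(a))) +
      (4 : ℤ) • (((a)*(c*d*b)*(e) - (a)*(e)*(c*d*b) - (c*d*b)*(a)*(e) + (c*d*b)*(e)*(a) + (e)*(a)*(c*d*b) - (e)*(c*d*b)*(a))) +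
      (4 : ℤ) • (((a)*(c*e*b)*(d) - (a)*(d)*(c*e*b) - (c*e*b)*(a)*(d) + (c*e*b)*(d)*(a) + (d)*(a)*(c*e*b) - (d)*(c*e*b)*(a))) +
      (2 : ℤ) • (((a)*(d*b)*(e) - (a)*(e)*(d*b) - (d*b)*(a)*(e) + (d*b)*(e)*(a) + (e)*(a)*(d*b) - (e)*(d*b)*(a)) * (c)) +
      (-10 : ℤ) • (((a)*(d*b*c)*(e) - (a)*(e)*(d*b*c) - (d*b*c)*(a)*(e) + (d*b*c)*(e)*(a) + (e)*(a)*(d*b*c) - (e)*(d*b*c)*(a))) +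
      (2 : ℤ) • (((a*b)*(c)*(d) - (a*b)*(d)*(c) - (c)*(a*b)*(d) + (c)*(d)*(a*b) + (d)*(a*b)*(c) - (d)*(c)*(a*b)) * (e)) +
      (4 : ℤ) • (((a*b)*(c)*(d*e) - (a*b)*(d*e)*(c) - (c)*(a*b)*(d*e) + (c)*(d*e)*(a*b) + (d*e)*(a*b)*(c) - (d*e)*(c)*(a*b))) +
      (11 : ℤ) • (((a*b)*(c)*(e) - (a*b)*(e)*(c) - (c)*(a*b)*(e) + (c)*(e)*(a*b) + (e)*(a*b)*(c) - (e)*(c)*(a*b)) * (d)) +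
      (-8 : ℤ) • (((a*b)*(c)*(e*d) - (a*b)*(e*d)*(c) - (c)*(a*b)*(e*d) + (c)*(e*d)*(a*b) + (e*d)*(a*b)*(c) - (e*d)*(c)*(a*b))) +
      (-4 : ℤ) • (((a*b)*(c*d)*(e) - (a*b)*(e)*(c*d) - (c*d)*(a*b)*(e) + (c*d)*(e)*(a*b) + (e)*(a*b)*(c*d) - (e)*(c*d)*(a*b))) +
      (-2 : ℤ) • (((a*b)*(c*e)*(d) - (a*b)*(d)*(c*e) - (c*e)*(a*b)*(d) + (c*e)*(d)*(a*b) + (d)*(a*b)*(c*e) - (d)*(c*e)*(a*b))) +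
      (3 : ℤ) • (((a*b)*(d)*(e) - (a*b)*(e)*(d) - (d)*(a*b)*(e) + (d)*(e)*(a*b) + (e)*(a*b)*(d) - (e)*(d)*(a*b)) * (c)) +
      (2 : ℤ) • (((a*b)*(d*c)*(e) - (a*b)*(e)*(d*c) - (d*c)*(a*b)*(e) + (d*c)*(e)*(a*b) + (e)*(a*b)*(d*c) - (e)*(d*c)*(a*b))) +
      (-7 : ℤ) • (((a*b*c)*(d)*(e) - (a*b*c)*(e)*(d) - (d)*(a*b*c)*(e) + (d)*(e)*(a*b*c) + (e)*(a*b*c)*(d) - (e)*(d)*(a*b*c))) +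
      (-7 : ℤ) • (((a*b*d)*(c)*(e) - (a*b*d)*(e)*(c) - (c)*(a*b*d)*(e) + (c)*(e)*(a*b*d) + (e)*(a*b*d)*(c) - (e)*(c)*(a*b*d))) +
      (1 : ℤ) • (((a*b*e)*(c)*(d) - (a*b*e)*(d)*(c) - (c)*(a*b*e)*(d) + (c)*(d)*(a*b*e) + (d)*(a*b*e)*(c) - (d)*(c)*(a*b*e))) +
      (5 : ℤ) • (((a*c)*(b)*(d) - (a*c)*(d)*(b) - (b)*(a*c)*(d) + (b)*(d)*(a*c) + (d)*(a*c)*(b) - (d)*(b)*(a*c)) * (e)) +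
      (-2 : ℤ) • (((a*c)*(b)*(d*e) - (a*c)*(d*e)*(b) - (b)*(a*c)*(d*e) + (b)*(d*e)*(a*c) + (d*e)*(a*c)*(b) - (d*e)*(b)*(a*c))) +
      (4 : ℤ) • (((a*c)*(d)*(e) - (a*c)*(e)*(d) - (d)*(a*c)*(e) + (d)*(e)*(a*c) + (e)*(a*c)*(d) - (e)*(d)*(a*c)) * (b)) +
      (2 : ℤ) • (((a*c)*(d*b)*(e) - (a*c)*(e)*(d*b) - (d*b)*(a*c)*(e) + (d*b)*(e)*(a*c) + (e)*(a*c)*(d*b) - (e)*(d*b)*(a*c))) +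
      (2 : ℤ) • (((a*c*b)*(d)*(e) - (a*c*b)*(e)*(d) - (d)*(a*c*b)*(e) + (d)*(e)*(a*c*b) + (e)*(a*c*b)*(d) - (e)*(d)*(a*c*b))) +
      (9 : ℤ) • (((a*d)*(b)*(c) - (a*d)*(c)*(b) - (b)*(a*d)*(c) + (b)*(c)*(a*d) + (c)*(a*d)*(b) - (c)*(b)*(a*d)) * (e)) +
      (-2 : ℤ) • (((a*d)*(b*c)*(e) - (a*d)*(e)*(b*c) - (b*c)*(a*d)*(e) + (b*c)*(e)*(a*d) + (e)*(a*d)*(b*c) - (e)*(b*c)*(a*d))) +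
      (10 : ℤ) • (((a*d*b)*(c)*(e) - (a*d*b)*(e)*(c) - (c)*(a*d*b)*(e) + (c)*(e)*(a*d*b) + (e)*(a*d*b)*(c) - (e)*(c)*(a*d*b))) +
      (-4 : ℤ) • (((b)*(c*a)*(d) - (b)*(d)*(c*a) - (c*a)*(b)*(d) + (c*a)*(d)*(b) + (d)*(b)*(c*a) - (d)*(c*a)*(b)) * (e)) +
      (-2 : ℤ) • (((b*a)*(c)*(d) - (b*a)*(d)*(c) - (c)*(b*a)*(d) + (c)*(d)*(b*a) + (d)*(b*a)*(c) - (d)*(c)*(b*a)) * (e)) +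
      (-4 : ℤ) • (((b*a)*(c)*(e*d) - (b*a)*(e*d)*(c) - (c)*(b*a)*(e*d) + (c)*(e*d)*(b*a) + (e*d)*(b*a)*(c) - (e*d)*(c)*(b*a))) +
      (4 : ℤ) • (((b*a)*(c*e)*(d) - (b*a)*(d)*(c*e) - (c*e)*(b*a)*(d) + (c*e)*(d)*(b*a) + (d)*(b*a)*(c*e) - (d)*(c*e)*(b*a))) +
      (4 : ℤ) • (((b*a)*(d*c)*(e) - (b*a)*(e)*(d*c) - (d*c)*(b*a)*(e) + (d*c)*(e)*(b*a) + (e)*(b*a)*(d*c) - (e)*(d*c)*(b*a))) +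
      (-2 : ℤ) • (((b*a*c)*(d)*(e) - (b*a*c)*(e)*(d) - (d)*(b*a*c)*(e) + (d)*(e)*(b*a*c) + (e)*(b*a*c)*(d) - (e)*(d)*(b*a*c))) +
      (-2 : ℤ) • (((b*a*d)*(c)*(e) - (b*a*d)*(e)*(c) - (c)*(b*a*d)*(e) + (c)*(e)*(b*a*d) + (e)*(b*a*d)*(c) - (e)*(c)*(b*a*d))) +
      (2 : ℤ) • ((a) * ((b)*(c)*(d) - (b)*(d)*(c) - (c)*(b)*(d) + (c)*(d)*(b) + (d)*(b)*(c) - (d)*(c)*(b)) * (e)) +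
      (-13 : ℤ) • ((a) * ((b)*(c)*(d*e) - (b)*(d*e)*(c) - (c)*(b)*(d*e) + (c)*(d*e)*(b) + (d*e)*(b)*(c) - (d*e)*(c)*(b))) +
      (-19 : ℤ) • ((a) * ((b)*(c)*(e) - (b)*(e)*(c) - (c)*(b)*(e) + (c)*(e)*(b) + (e)*(b)*(c) - (e)*(c)*(b)) * (d)) +
      (8 : ℤ) • ((a) * ((b)*(c)*(e*d) - (b)*(e*d)*(c) - (c)*(b)*(e*d) + (c)*(e*d)*(b) + (e*d)*(b)*(c) - (e*d)*(c)*(b))) +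
      (9 : ℤ) • ((a) * ((b)*(c*d)*(e) - (b)*(e)*(c*d) - (c*d)*(b)*(e) + (c*d)*(e)*(b) + (e)*(b)*(c*d) - (e)*(c*d)*(b))) +
      (-3 : ℤ) • ((a) * ((b)*(c*e)*(d) - (b)*(d)*(c*e) - (c*e)*(b)*(d) + (c*e)*(d)*(b) + (d)*(b)*(c*e) - (d)*(c*e)*(b))) +
      (1 : ℤ) • ((a) * ((b)*(d)*(e) - (b)*(e)*(d) - (d)*(b)*(e) + (d)*(e)*(b) + (e)*(b)*(d) - (e)*(d)*(b)) * (c)) +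
      (-5 : ℤ) • ((a) * ((b)*(d*c)*(e) - (b)*(e)*(d*c) - (d*c)*(b)*(e) + (d*c)*(e)*(b) + (e)*(b)*(d*c) - (e)*(d*c)*(b))) +
      (10 : ℤ) • ((a) * ((b*c)*(d)*(e) - (b*c)*(e)*(d) - (d)*(b*c)*(e) + (d)*(e)*(b*c) + (e)*(b*c)*(d) - (e)*(d)*(b*c))) +
      (6 : ℤ) • ((a) * ((b*d)*(c)*(e) - (b*d)*(e)*(c) - (c)*(b*d)*(e) + (c)*(e)*(b*d) + (e)*(b*d)*(c) - (e)*(c)*(b*d))) +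
      (10 : ℤ) • ((a) * ((b*e)*(c)*(d) - (b*e)*(d)*(c) - (c)*(b*e)*(d) + (c)*(d)*(b*e) + (d)*(b*e)*(c) - (d)*(c)*(b*e))) +
      (-2 : ℤ) • ((a) * ((c)*(d)*(e) - (c)*(e)*(d) - (d)*(c)*(e) + (d)*(e)*(c) + (e)*(c)*(d) - (e)*(d)*(c)) * (b)) +
      (1 : ℤ) • ((a) * ((c)*(d*b)*(e) - (c)*(e)*(d*b) - (d*b)*(c)*(e) + (d*b)*(e)*(c) + (e)*(c)*(d*b) - (e)*(d*b)*(c))) +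
      (-11 : ℤ) • ((a) * ((c*b)*(d)*(e) - (c*b)*(e)*(d) - (d)*(c*b)*(e) + (d)*(e)*(c*b) + (e)*(c*b)*(d) - (e)*(d)*(c*b))) +
      (-12 : ℤ) • ((a*b) * ((c)*(d)*(e) - (c)*(e)*(d) - (d)*(c)*(e) + (d)*(e)*(c) + (e)*(c)*(d) - (e)*(d)*(c)))) := by
    simp only [mul_add, add_mul, mul_sub, sub_mul, mul_assoc, smul_add, smul_sub]
    abel
  have key2 : (a*b*c*d*e + a*b*d*c*e + a*c*b*d*e + a*c*d*b*e + a*d*b*c*e + a*d*c*b*e)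
      + (a*b*c*d*e + a*b*d*c*e + a*c*b*d*e + a*c*d*b*e + a*d*b*c*e + a*d*c*b*e)
      = 12 • (a*b*c*d*e) := by
    rw [key]
    simp only [h, mul_zero, zero_mul, smul_zero, add_zero]
  refine smul_right_injective A (two_ne_zero' K) ?_
  show (2:K) • _ = (2:K) • _
  rw [two_smul, two_smul, key2]
  abel



theorem second_type_symmetrization {K A : Type*} [Field K] [CharZero K]
    [NonUnitalRing A] [Module K A] [IsScalarTower K A A] [SMulCommClass K A A]
    (h : ∀ a b c : A,
      a*b*c - a*c*b - b*a*c + b*c*a + c*a*b - c*b*a = 0)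
    (x : Fin 5 → A) :
    (∑ σ : Equiv.Perm (Fin 5), x (σ 0) * x (σ 1) * x (σ 2) * x (σ 3) * x (σ 4)) =
      6 • ∑ i : Fin 5, ∑ j ∈ Finset.univ.erase i,
        ((((List.finRange 5).filter (fun k => decide (k ≠ i ∧ k ≠ j))).map x)
          ++ [x j]).foldl (· * ·) (x i) := by
  have six : ∀ a b c d e : A, a*b*c*d*e + a*b*d*c*e + a*c*b*d*e + a*c*d*b*e + a*d*b*c*e + a*d*c*b*e
      = 6 • (a*b*c*d*e) := sixfold (K := K) h
  have hR : (∑ i : Fin 5, ∑ j ∈ Finset.univ.erase i,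
        ((((List.finRange 5).filter (fun k => decide (k ≠ i ∧ k ≠ j))).map x)
          ++ [x j]).foldl (· * ·) (x i)) =
      (x 0 * x 2 * x 3 * x 4 * x 1 + x 0 * x 1 * x 3 * x 4 * x 2 + x 0 * x 1 * x 2 * x 4 * x 3 + x 0 * x 1 * x 2 * x 3 * x 4)
    + (x 1 * x 2 * x 3 * x 4 * x 0 + x 1 * x 0 * x 3 * x 4 * x 2 + x 1 * x 0 * x 2 * x 4 * x 3 + x 1 * x 0 * x 2 * x 3 * x 4)
    + (x 2 * x 1 * x 3 * x 4 * x 0 + x 2 * x 0 * x 3 * x 4 * x 1 + x 2 * x 0 * x 1 * x 4 * x 3 + x 2 * x 0 * x 1 * x 3 * x 4)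
    + (x 3 * x 1 * x 2 * x 4 * x 0 + x 3 * x 0 * x 2 * x 4 * x 1 + x 3 * x 0 * x 1 * x 4 * x 2 + x 3 * x 0 * x 1 * x 2 * x 4)
    + (x 4 * x 1 * x 2 * x 3 * x 0 + x 4 * x 0 * x 2 * x 3 * x 1 + x 4 * x 0 * x 1 * x 3 * x 2 + x 4 * x 0 * x 1 * x 2 * x 3) := by
    norm_num [Fin.sum_univ_five, Finset.sum_erase_eq_sub, List.finRange]
    abel
  rw [hR]
  have e4 : (4 : Fin 5) = Fin.succ 3 := rfl
  have e3 : (3 : Fin 5) = Fin.succ 2 := rfl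
  have e2 : (2 : Fin 5) = Fin.succ 1 := rfl
  have f3 : (3 : Fin 4) = Fin.succ 2 := rfl
  have f2 : (2 : Fin 4) = Fin.succ 1 := rfl
  have g2 : (2 : Fin 3) = Fin.succ 1 := rfl
  have g1 : (1 : Fin 2) = Fin.succ 0 := rfl
  simp only [perm_sum_5, perm_sum_4, perm_sum_3, perm_sum_2, perm_sum_one]
  simp only [e4, e3, e2, f3, f2, g2, g1, Equiv.Perm.decomposeFin_symm_apply_zero,
    Equiv.Perm.decomposeFin_symm_apply_one, Equiv.Perm.decomposeFin_symm_apply_succ,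
    Equiv.Perm.decomposeFin_symm_of_one]
  simp only [Fin.sum_univ_five, Fin.sum_univ_four, Fin.sum_univ_three, Fin.sum_univ_two]
  simp (config := { decide := true }) only [Equiv.swap_apply_def, Fin.isValue]
  norm_num
  simp only [show (Fin.succ (2:Fin 4)) = (3:Fin 5) from rfl,
    show (Fin.succ (3:Fin 4)) = (4:Fin 5) from rfl,
    show ((Fin.succ (2:Fin 3)).succ : Fin 5) = (4:Fin 5) from rfl,
    show ((Fin.succ (1:Fin 3)).succ : Fin 5) = (3:Fin 5) from rfl,
    show (Fin.succ (2:Fin 3) : Fin 4) = (3:Fin 4) from rfl,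
    show (Fin.succ (1:Fin 2) : Fin 3) = (2:Fin 3) from rfl]
  rw [← six (x 0) (x 2) (x 3) (x 4) (x 1),
    ← six (x 0) (x 1) (x 3) (x 4) (x 2),
    ← six (x 0) (x 1) (x 2) (x 4) (x 3),
    ← six (x 0) (x 1) (x 2) (x 3) (x 4),
    ← six (x 1) (x 2) (x 3) (x 4) (x 0),
    ← six (x 1) (x 0) (x 3) (x 4) (x 2),
    ← six (x 1) (x 0) (x 2) (x 4) (x 3),
    ← six (x 1) (x 0) (x 2) (x 3) (x 4),
    ← six (x 2) (x 1) (x 3) (x 4) (x 0),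
    ← six (x 2) (x 0) (x 3) (x 4) (x 1),
    ← six (x 2) (x 0) (x 1) (x 4) (x 3),
    ← six (x 2) (x 0) (x 1) (x 3) (x 4),
    ← six (x 3) (x 1) (x 2) (x 4) (x 0),
    ← six (x 3) (x 0) (x 2) (x 4) (x 1),
    ← six (x 3) (x 0) (x 1) (x 4) (x 2),
    ← six (x 3) (x 0) (x 1) (x 2) (x 4),
    ← six (x 4) (x 1) (x 2) (x 3) (x 0),
    ← six (x 4) (x 0) (x 2) (x 3) (x 1),
    ← six (x 4) (x 0) (x 1) (x 3) (x 2),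
    ← six (x 4) (x 0) (x 1) (x 2) (x 3)]
  abel
end

section
/- Let A be an associative algebra over a field of characteristic 0 satisfying the third-type identity abc + bac - bca - cba = 0 for all a,b,c, with commutator [a,b] = ab − ba and anti-commutator {a,b} = ab + ba. Then for all a,b,c,d ∈ A: [[a,b],[c,d]] = 0, [[a,b],{c,d}] = 0, [{a,b},{c,d}] = 0, {{a,b},[c,d]} = 0, and {[a,b],[c,d]} = 0. -/
def br {A : Type*} [NonUnitalRing A] (x y : A) : A := x * y - y * x
def ac {A : Type*} [NonUnitalRing A] (x y : A) : A := x * y + y * x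

set_option maxHeartbeats 4000000 in
theorem third_type_deg4_brackets {K A : Type*} [Field K] [CharZero K]
    [NonUnitalRing A] [Module K A] [IsScalarTower K A A] [SMulCommClass K A A]
    (h : ∀ a b c : A, a*b*c + b*a*c - b*c*a - c*b*a = 0) :
    ∀ a b c d : A,
      br (br a b) (br c d) = 0 ∧
      br (br a b) (ac c d) = 0 ∧
      br (ac a b) (ac c d) = 0 ∧
      ac (ac a b) (br c d) = 0 ∧
      ac (br a b) (br c d) = 0 := by
  intro a b c d
  have tf : ∀ x : A, x + x + x = 0 → x = 0 := by
    intro x hx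
    have h3 : ((3:ℕ):K) • x = 0 := by
      rw [Nat.cast_smul_eq_nsmul, show (3:ℕ) = 2 + 1 from rfl, add_nsmul, two_nsmul, one_nsmul]
      exact hx
    rcases smul_eq_zero.mp h3 with h' | h'
    · exact absurd h' (by norm_num)
    · exact h'
  have key0 : ((a*b - b*a)*(c*d - d*c) - (c*d - d*c)*(a*b - b*a)) = (c*(a*b)*d + (a*b)*c*d - (a*b)*d*c - d*(a*b)*c) - ((a*d)*b*c + b*(a*d)*c - b*c*(a*d) - c*b*(a*d)) + (b*(a*d)*c + (a*d)*b*c - (a*d)*c*b - c*(a*d)*b) - (c*(b*a)*d + (b*a)*c*d - (b*a)*d*c - d*(b*a)*c) - ((b*c)*a*d + a*(b*c)*d - a*d*(b*c) - d*a*(b*c)) + (a*(b*c)*d + (b*c)*a*d - (b*c)*d*a - d*(b*c)*a) - (b*(c*a)*d + (c*a)*b*d - (c*a)*d*b - d*(c*a)*b) - ((c*b)*a*d + a*(c*b)*d - a*d*(c*b) - d*a*(c*b)) + (a*(c*b)*d + (c*b)*a*d - (c*b)*d*a - d*(c*b)*a) - ((d*a)*b*c + b*(d*a)*c - b*c*(d*a)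 - c*b*(d*a)) + (b*(d*a)*c + (d*a)*b*c - (d*a)*c*b - c*(d*a)*b) - (a*(d*b)*c + (d*b)*a*c - (d*b)*c*a - c*(d*b)*a) := by noncomm_ring
  rw [h (a*d) b c, h (b*c) a d, h (c*b) a d, h (d*a) b c, h a (b*c) d, h a (c*b) d, h a (d*b) c, h b (a*d) c, h b (c*a) d, h b (d*a) c, h c (a*b) d, h c (b*a) d] at key0
  simp only [smul_zero, mul_zero, zero_mul, add_zero, zero_add, sub_zero, zero_sub, neg_zero] at key0

  have key1 : ((a*b - b*a)*(c*d + d*c) - (c*d + d*c)*(a*b - b*a)) = ((a*b)*c*d + c*(a*b)*d - c*d*(a*b) - d*c*(a*b)) - ((a*d)*b*c + b*(a*d)*c - b*c*(a*d) - c*b*(a*d)) - ((b*a)*c*d + c*(b*a)*d - c*d*(b*a) - d*c*(b*a)) - ((b*c)*a*d + a*(b*c)*d - a*d*(b*c) - d*a*(b*c)) + (a*(b*c)*d + (b*c)*a*d - (b*c)*d*a - d*(b*c)*a) + (a*(b*d)*c + (b*d)*a*c - (b*d)*c*a - c*(b*d)*a) - ((c*a)*b*d + b*(c*a)*d - b*d*(c*a)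 - d*b*(c*a)) - ((d*a)*b*c + b*(d*a)*c - b*c*(d*a) - c*b*(d*a)) := by noncomm_ring
  rw [h (a*b) c d, h (a*d) b c, h (b*a) c d, h (b*c) a d, h (c*a) b d, h (d*a) b c, h a (b*c) d, h a (b*d) c] at key1
  simp only [smul_zero, mul_zero, zero_mul, add_zero, zero_add, sub_zero, zero_sub, neg_zero] at key1

  have key2 : ((a*b + b*a)*(c*d + d*c) - (c*d + d*c)*(a*b + b*a)) = ((a*b)*c*d + c*(a*b)*d - c*d*(a*b) - d*c*(a*b)) - (c*(a*b)*d + (a*b)*c*d - (a*b)*d*c - d*(a*b)*c) + ((a*d)*b*c + b*(a*d)*c - b*c*(a*d) - c*b*(a*d)) + ((b*a)*c*d + c*(b*a)*d - c*d*(b*a) - d*c*(b*a)) + ((b*c)*a*d + a*(b*c)*d - a*d*(b*c) - d*a*(b*c)) := by noncomm_ring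
  rw [h (a*b) c d, h (a*d) b c, h (b*a) c d, h (b*c) a d, h c (a*b) d] at key2
  simp only [smul_zero, mul_zero, zero_mul, add_zero, zero_add, sub_zero, zero_sub, neg_zero] at key2

  have key3 : ((a*b + b*a)*(c*d - d*c) + (c*d - d*c)*(a*b + b*a)) + ((a*b + b*a)*(c*d - d*c) + (c*d - d*c)*(a*b + b*a)) + ((a*b + b*a)*(c*d - d*c) + (c*d - d*c)*(a*b + b*a)) = (4:ℕ) • (c*(a*b)*d + (a*b)*c*d - (a*b)*d*c - d*(a*b)*c) - ((a*d)*b*c + b*(a*d)*c - b*c*(a*d) - c*b*(a*d)) + (b*(a*d)*c + (a*d)*b*c - (a*d)*c*b - c*(a*d)*b) + (3:ℕ) • (c*(b*a)*d + (b*a)*c*d - (b*a)*d*c - d*(b*a)*c) - ((b*c)*a*d + a*(b*c)*d - a*d*(b*c) - d*a*(b*c)) + (a*(b*d)*c + (b*d)*a*c - (b*d)*c*a - c*(b*d)*a) - ((c*a)*b*d + b*(c*a)*d - b*d*(c*a) - d*b*(c*a)) + (b*(c*a)*d + (c*a)*b*d - (c*a)*d*b - d*(c*a)*b) - ((c*b)*a*d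 + a*(c*b)*d - a*d*(c*b) - d*a*(c*b)) + (a*(c*b)*d + (c*b)*a*d - (c*b)*d*a - d*(c*b)*a) - (b*(d*a)*c + (d*a)*b*c - (d*a)*c*b - c*(d*a)*b) - (a*(d*b)*c + (d*b)*a*c - (d*b)*c*a - c*(d*b)*a) + (4:ℕ) • d * (a*b*c + b*a*c - b*c*a - c*b*a) - (4:ℕ) • c * (a*b*d + b*a*d - b*d*a - d*b*a) - (2:ℕ) • d * (a*c*b + c*a*b - c*b*a - b*c*a) + (2:ℕ) • c * (a*d*b + d*a*b - d*b*a - b*d*a) := by noncomm_ring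
  rw [h (a*d) b c, h (b*c) a d, h (c*a) b d, h (c*b) a d, h a (b*d) c, h a (c*b) d, h a (d*b) c, h a b c, h a b d, h a c b, h a d b, h b (a*d) c, h b (c*a) d, h b (d*a) c, h c (a*b) d, h c (b*a) d] at key3
  simp only [smul_zero, mul_zero, zero_mul, add_zero, zero_add, sub_zero, zero_sub, neg_zero] at key3

  have key4 : ((a*b - b*a)*(c*d - d*c) + (c*d - d*c)*(a*b - b*a)) + ((a*b - b*a)*(c*d - d*c) + (c*d - d*c)*(a*b - b*a)) + ((a*b - b*a)*(c*d - d*c) + (c*d - d*c)*(a*b - b*a)) = (5:ℕ) • (c*(a*b)*d + (a*b)*c*d - (a*b)*d*c - d*(a*b)*c) + (6:ℕ) • ((a*c)*b*d + b*(a*c)*d - b*d*(a*c) - d*b*(a*c)) - (11:ℕ) • ((a*d)*b*c + b*(a*d)*c - b*c*(a*d) - c*b*(a*d)) + (5:ℕ) • (b*(a*d)*c + (a*d)*b*c - (a*d)*c*b - c*(a*d)*b) + (12:ℕ) • ((b*a)*c*d + c*(b*a)*d - c*d*(b*a) - d*c*(b*a)) - (9:ℕ) • (c*(b*a)*d + (b*a)*c*d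 - (b*a)*d*c - d*(b*a)*c) - (5:ℕ) • ((b*c)*a*d + a*(b*c)*d - a*d*(b*c) - d*a*(b*c)) + (3:ℕ) • (a*(b*c)*d + (b*c)*a*d - (b*c)*d*a - d*(b*c)*a) + (2:ℕ) • (a*(b*d)*c + (b*d)*a*c - (b*d)*c*a - c*(b*d)*a) + (10:ℕ) • ((c*a)*b*d + b*(c*a)*d - b*d*(c*a) - d*b*(c*a)) - (7:ℕ) • (b*(c*a)*d + (c*a)*b*d - (c*a)*d*b - d*(c*a)*b) - (5:ℕ) • ((c*b)*a*d + a*(c*b)*d - a*d*(c*b) - d*a*(c*b)) - (a*(c*b)*d + (c*b)*a*d - (c*b)*d*a - d*(c*b)*a) + (9:ℕ) • ((d*a)*b*c + b*(d*a)*c - b*c*(d*a) - c*b*(d*a)) - (5:ℕ) • (b*(d*a)*c + (d*a)*b*c - (d*a)*c*b - c*(d*a)*b) + (a*(d*b)*c + (d*b)*a*c - (d*b)*c*a - c*(d*b)*a) - (4:ℕ) • d * (a*b*c + b*a*c - b*c*a - c*b*a) - (8:ℕ) • c * (a*b*d + b*a*d - b*d*a - d*b*a) - (10:ℕ) • d *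 (a*c*b + c*a*b - c*b*a - b*c*a) - (12:ℕ) • b * (a*c*d + c*a*d - c*d*a - d*c*a) - (2:ℕ) • c * (a*d*b + d*a*b - d*b*a - b*d*a) := by noncomm_ring
  rw [h (a*c) b d, h (a*d) b c, h (b*a) c d, h (b*c) a d, h (c*a) b d, h (c*b) a d, h (d*a) b c, h a (b*c) d, h a (b*d) c, h a (c*b) d, h a (d*b) c, h a b c, h a b d, h a c b, h a c d, h a d b, h b (a*d) c, h b (c*a) d, h b (d*a) c, h c (a*b) d, h c (b*a) d] at key4
  simp only [smul_zero, mul_zero, zero_mul, add_zero, zero_add, sub_zero, zero_sub, neg_zero] at key4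
  refine ⟨?_, ?_, ?_, ?_, ?_⟩
  · simpa [br] using key0
  · simpa [br, ac] using key1
  · simpa [br, ac] using key2
  · simp only [br, ac]
    exact tf _ key3
  · simp only [br, ac]
    exact tf _ key4
end

section
/- Let A be an associative algebra over a field of characteristic 0 satisfying abc + bac - bca - cba = 0. Then for all a,b,c,d ∈ A: [[[a,b],c],d] = 0, {[[a,b],c],d} = 0, [{[a,b],c},d] = 0, [[{a,b},c],d] = 0, [{{a,b},c},d] = 0, {[{a,b},c],d} = 0, and {{[a,b],c},d} = 0. -/
private lemma nsmul_cancel {K A : Type*} [Field K] [CharZero K] [AddCommGroup A]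
    [Module K A] (n : ℕ) (hn : n ≠ 0) {x : A} (h : n • x = 0) : x = 0 := by
  have h' : ((n : K)) • x = 0 := by rw [Nat.cast_smul_eq_nsmul]; exact h
  rcases smul_eq_zero.mp h' with h'' | h''
  · exact absurd (Nat.cast_eq_zero.mp h'') hn
  · exact h''

set_option maxHeartbeats 4000000 in
theorem third_type_deg4_left_normed {K A : Type*} [Field K] [CharZero K]
    [NonUnitalRing A] [Module K A] [IsScalarTower K A A] [SMulCommClass K A A]
    (h : ∀ a b c : A, a*b*c + b*a*c - b*c*a - c*b*a = 0) :
    ∀ a b c d : A,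
      br (br (br a b) c) d = 0 ∧
      ac (br (br a b) c) d = 0 ∧
      br (ac (br a b) c) d = 0 ∧
      br (br (ac a b) c) d = 0 ∧
      br (ac (ac a b) c) d = 0 ∧
      ac (br (ac a b) c) d = 0 ∧
      ac (ac (br a b) c) d = 0 := by
  intro a b c d
  have k1 : ((a*b - b*a)*c - c*(a*b - b*a))*d = 0 := by
    refine nsmul_cancel (K := K) 3 (by norm_num) ?_
    have e : (3 : ℕ) • (((a*b - b*a)*c - c*(a*b - b*a))*d) = (3 : ℤ) • (a * (b*c*d + c*b*d - c*d*b - d*c*b)) + (4 : ℤ) • ((b*c*d + c*b*d - c*d*b - d*c*b) * a) + (-4 : ℤ) • (((a*b)*c*d + c*(a*b)*d - c*d*(a*b) - d*c*(a*b))) + (7 : ℤ) • ((c*(a*b)*d + (a*b)*c*d - (a*b)*d*c - d*(a*b)*c)) + (-3 : ℤ) • (a * (b*d*c + d*b*c - d*c*b - c*d*b)) + (-2 : ℤ) • ((b*d*c + d*b*c - d*c*b - c*d*b) * a) + (-5 : ℤ) • (((a*c)*b*d + b*(a*c)*d - b*d*(a*c) - d*b*(a*c))) + (2 : ℤ) •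 ((b*(a*c)*d + (a*c)*b*d - (a*c)*d*b - d*(a*c)*b)) + (-6 : ℤ) • (((a*d)*b*c + b*(a*d)*c - b*c*(a*d) - c*b*(a*d))) + (2 : ℤ) • ((b*(a*d)*c + (a*d)*b*c - (a*d)*c*b - c*(a*d)*b)) + (3 : ℤ) • (b * (a*c*d + c*a*d - c*d*a - d*c*a)) + (2 : ℤ) • ((a*c*d + c*a*d - c*d*a - d*c*a) * b) + (-2 : ℤ) • (((b*a)*c*d + c*(b*a)*d - c*d*(b*a) - d*c*(b*a))) + (-1 : ℤ) • ((c*(b*a)*d + (b*a)*c*d - (b*a)*d*c - d*(b*a)*c)) + (-3 : ℤ) • (b * (a*d*c + d*a*c - d*c*a - c*d*a)) + (2 : ℤ) • ((a*d*c + d*a*c - d*c*a - c*d*a) * b) + (-7 : ℤ) • (((b*c)*a*d + a*(b*c)*d - a*d*(b*c) - d*a*(b*c))) + (4 : ℤ) • ((a*(b*c)*d + (b*c)*a*d - (b*c)*d*a - d*(b*c)*a)) + (4 : ℤ) • ((a*(b*d)*c + (b*d)*a*c - (b*d)*c*a - c*(b*d)*a)) + (6 : ℤ) • ((a*b*d +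 b*a*d - b*d*a - d*b*a) * c) + (-6 : ℤ) • (((c*a)*b*d + b*(c*a)*d - b*d*(c*a) - d*b*(c*a))) := by noncomm_ring
    rw [e]
    simp only [h, mul_zero, zero_mul, smul_zero, add_zero, zero_add]
  have k2 : d*((a*b - b*a)*c - c*(a*b - b*a)) = 0 := by
    refine nsmul_cancel (K := K) 6 (by norm_num) ?_
    have e : (6 : ℕ) • (d*((a*b - b*a)*c - c*(a*b - b*a))) = (12 : ℤ) • (a * (b*c*d + c*b*d - c*d*b - d*c*b)) + (2 : ℤ) • ((b*c*d + c*b*d - c*d*b - d*c*b) * a) + (-5 : ℤ) • (((a*b)*c*d + c*(a*b)*d - c*d*(a*b) - d*c*(a*b))) + (-7 : ℤ) • ((c*(a*b)*d + (a*b)*c*d - (a*b)*d*c - d*(a*b)*c)) + (-9 : ℤ) • (a * (b*d*c + d*b*c - d*c*b - c*d*b)) + (-1 : ℤ) • ((b*d*c + d*b*c - d*c*b - c*d*b) * a) + (-13 : ℤ) • (((a*c)*b*d + b*(a*c)*d - b*d*(a*c) - d*b*(a*c))) + (1 : ℤ) • ((b*(a*c)*d + (a*c)*b*d - (a*c)*d*b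 - d*(a*c)*b)) + (12 : ℤ) • (((a*d)*b*c + b*(a*d)*c - b*c*(a*d) - c*b*(a*d))) + (-2 : ℤ) • ((b*(a*d)*c + (a*d)*b*c - (a*d)*c*b - c*(a*d)*b)) + (6 : ℤ) • (b * (a*c*d + c*a*d - c*d*a - d*c*a)) + (4 : ℤ) • ((a*c*d + c*a*d - c*d*a - d*c*a) * b) + (-7 : ℤ) • (((b*a)*c*d + c*(b*a)*d - c*d*(b*a) - d*c*(b*a))) + (13 : ℤ) • ((c*(b*a)*d + (b*a)*c*d - (b*a)*d*c - d*(b*a)*c)) + (-3 : ℤ) • (b * (a*d*c + d*a*c - d*c*a - c*d*a)) + (1 : ℤ) • ((a*d*c + d*a*c - d*c*a - c*d*a) * b) + (1 : ℤ) • (((b*c)*a*d + a*(b*c)*d - a*d*(b*c) - d*a*(b*c))) + (-1 : ℤ) • ((a*(b*c)*d + (b*c)*a*d - (b*c)*d*a - d*(b*c)*a)) + (-4 : ℤ) • ((a*(b*d)*c + (b*d)*a*c - (b*d)*c*a - c*(b*d)*a)) + (6 : ℤ) • (c * (a*b*d + b*a*d - b*d*a - d*b*a)) + (6 : ℤ)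 • ((a*b*d + b*a*d - b*d*a - d*b*a) * c) + (6 : ℤ) • ((b*(c*a)*d + (c*a)*b*d - (c*a)*d*b - d*(c*a)*b)) := by noncomm_ring
    rw [e]
    simp only [h, mul_zero, zero_mul, smul_zero, add_zero, zero_add]
  have k3 : ((a*b - b*a)*c + c*(a*b - b*a))*d = 0 := by
    refine nsmul_cancel (K := K) 3 (by norm_num) ?_
    have e : (3 : ℕ) • (((a*b - b*a)*c + c*(a*b - b*a))*d) = (1 : ℤ) • ((b*c*d + c*b*d - c*d*b - d*c*b) * a) + (2 : ℤ) • (((a*b)*c*d + c*(a*b)*d - c*d*(a*b) - d*c*(a*b))) + (1 : ℤ) • ((c*(a*b)*d + (a*b)*c*d - (a*b)*d*c - d*(a*b)*c)) + (1 : ℤ) • ((b*d*c + d*b*c - d*c*b - c*d*b) * a) + (1 : ℤ) • (((a*c)*b*d + b*(a*c)*d - b*d*(a*c) - d*b*(a*c))) + (-1 : ℤ) • ((b*(a*c)*d + (a*c)*b*d - (a*c)*d*b - d*(a*c)*b)) + (-1 : ℤ) • ((b*(a*d)*c + (a*d)*b*c - (a*d)*c*b - c*(a*d)*b)) + (-1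 : ℤ) • ((a*c*d + c*a*d - c*d*a - d*c*a) * b) + (-2 : ℤ) • (((b*a)*c*d + c*(b*a)*d - c*d*(b*a) - d*c*(b*a))) + (-1 : ℤ) • ((c*(b*a)*d + (b*a)*c*d - (b*a)*d*c - d*(b*a)*c)) + (-1 : ℤ) • ((a*d*c + d*a*c - d*c*a - c*d*a) * b) + (-1 : ℤ) • (((b*c)*a*d + a*(b*c)*d - a*d*(b*c) - d*a*(b*c))) + (1 : ℤ) • ((a*(b*c)*d + (b*c)*a*d - (b*c)*d*a - d*(b*c)*a)) + (1 : ℤ) • ((a*(b*d)*c + (b*d)*a*c - (b*d)*c*a - c*(b*d)*a)) := by noncomm_ring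
    rw [e]
    simp only [h, mul_zero, zero_mul, smul_zero, add_zero, zero_add]
  have k4 : d*((a*b - b*a)*c + c*(a*b - b*a)) = 0 := by
    refine nsmul_cancel (K := K) 6 (by norm_num) ?_
    have e : (6 : ℕ) • (d*((a*b - b*a)*c + c*(a*b - b*a))) = (6 : ℤ) • (a * (b*c*d + c*b*d - c*d*b - d*c*b)) + (-4 : ℤ) • ((b*c*d + c*b*d - c*d*b - d*c*b) * a) + (1 : ℤ) • (((a*b)*c*d + c*(a*b)*d - c*d*(a*b) - d*c*(a*b))) + (-1 : ℤ) • ((c*(a*b)*d + (a*b)*c*d - (a*b)*d*c - d*(a*b)*c)) + (-9 : ℤ) • (a * (b*d*c + d*b*c - d*c*b - c*d*b)) + (11 : ℤ) • ((b*d*c + d*b*c - d*c*b - c*d*b) * a) + (-7 : ℤ) • (((a*c)*b*d + b*(a*c)*d - b*d*(a*c) - d*b*(a*c))) + (1 : ℤ) • ((b*(a*c)*d + (a*c)*b*d - (a*c)*d*b - d*(a*c)*b)) + (4 : ℤ) • ((b*(a*d)*c + (a*d)*b*c - (a*d)*c*b - c*(a*d)*b)) + (-2 : ℤ) • ((a*c*d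 + c*a*d - c*d*a - d*c*a) * b) + (-1 : ℤ) • (((b*a)*c*d + c*(b*a)*d - c*d*(b*a) - d*c*(b*a))) + (7 : ℤ) • ((c*(b*a)*d + (b*a)*c*d - (b*a)*d*c - d*(b*a)*c)) + (-3 : ℤ) • (b * (a*d*c + d*a*c - d*c*a - c*d*a)) + (1 : ℤ) • ((a*d*c + d*a*c - d*c*a - c*d*a) * b) + (-5 : ℤ) • (((b*c)*a*d + a*(b*c)*d - a*d*(b*c) - d*a*(b*c))) + (-1 : ℤ) • ((a*(b*c)*d + (b*c)*a*d - (b*c)*d*a - d*(b*c)*a)) + (2 : ℤ) • ((a*(b*d)*c + (b*d)*a*c - (b*d)*c*a - c*(b*d)*a)) + (-6 : ℤ) • (c * (a*b*d + b*a*d - b*d*a - d*b*a)) + (6 : ℤ) • ((a*b*d + b*a*d - b*d*a - d*b*a) * c) + (12 : ℤ) • (((c*a)*b*d + b*(c*a)*d - b*d*(c*a) - d*b*(c*a))) + (-6 : ℤ) • ((b*(c*a)*d + (c*a)*b*d - (c*a)*d*b - d*(c*a)*b)) := by noncomm_ring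
    rw [e]
    simp only [h, mul_zero, zero_mul, smul_zero, add_zero, zero_add]
  have k5 : ((a*b + b*a)*c - c*(a*b + b*a))*d = 0 := by
    refine nsmul_cancel (K := K) 1 (by norm_num) ?_
    have e : (1 : ℕ) • (((a*b + b*a)*c - c*(a*b + b*a))*d) = (1 : ℤ) • (a * (b*c*d + c*b*d - c*d*b - d*c*b)) + (-1 : ℤ) • ((c*(a*b)*d + (a*b)*c*d - (a*b)*d*c - d*(a*b)*c)) + (-1 : ℤ) • (a * (b*d*c + d*b*c - d*c*b - c*d*b)) + (-1 : ℤ) • (((a*c)*b*d + b*(a*c)*d - b*d*(a*c) - d*b*(a*c))) + (2 : ℤ) • (((a*d)*b*c + b*(a*d)*c - b*c*(a*d) - c*b*(a*d))) + (1 : ℤ) • (b * (a*c*d + c*a*d - c*d*a - d*c*a)) + (1 : ℤ) • ((c*(b*a)*d + (b*a)*c*d - (b*a)*d*c - d*(b*a)*c)) + (-1 : ℤ) • (b * (a*d*c + d*a*c - d*c*a - c*d*a)) + (1 : ℤ) • (((b*c)*a*d + a*(b*c)*d - a*d*(b*c) - d*a*(b*c))) := by noncomm_ring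
    rw [e]
    simp only [h, mul_zero, zero_mul, smul_zero, add_zero, zero_add]
  have k6 : d*((a*b + b*a)*c - c*(a*b + b*a)) = 0 := by
    refine nsmul_cancel (K := K) 2 (by norm_num) ?_
    have e : (2 : ℕ) • (d*((a*b + b*a)*c - c*(a*b + b*a))) = (3 : ℤ) • (a * (b*c*d + c*b*d - c*d*b - d*c*b)) + (-1 : ℤ) • ((b*c*d + c*b*d - c*d*b - d*c*b) * a) + (-1 : ℤ) • (((a*b)*c*d + c*(a*b)*d - c*d*(a*b) - d*c*(a*b))) + (1 : ℤ) • ((c*(a*b)*d + (a*b)*c*d - (a*b)*d*c - d*(a*b)*c)) + (-2 : ℤ) • (a * (b*d*c + d*b*c - d*c*b - c*d*b)) + (-3 : ℤ) • (((a*c)*b*d + b*(a*c)*d - b*d*(a*c) - d*b*(a*c))) + (-1 : ℤ) • ((b*(a*d)*c + (a*d)*b*c - (a*d)*c*b - c*(a*d)*b)) + (1 : ℤ) • (b * (a*c*d + c*a*d - c*d*a - d*c*a)) + (1 : ℤ) • ((a*c*d + c*a*d - c*d*a - d*c*a) * b) + (3 : ℤ) • (((b*a)*c*d + c*(b*a)*d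 - c*d*(b*a) - d*c*(b*a))) + (-1 : ℤ) • ((c*(b*a)*d + (b*a)*c*d - (b*a)*d*c - d*(b*a)*c)) + (-2 : ℤ) • (b * (a*d*c + d*a*c - d*c*a - c*d*a)) + (-3 : ℤ) • (((b*c)*a*d + a*(b*c)*d - a*d*(b*c) - d*a*(b*c))) + (1 : ℤ) • ((a*(b*d)*c + (b*d)*a*c - (b*d)*c*a - c*(b*d)*a)) + (-2 : ℤ) • (c * (a*b*d + b*a*d - b*d*a - d*b*a)) + (2 : ℤ) • ((a*b*d + b*a*d - b*d*a - d*b*a) * c) + (2 : ℤ) • ((b*(c*a)*d + (c*a)*b*d - (c*a)*d*b - d*(c*a)*b)) := by noncomm_ring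
    rw [e]
    simp only [h, mul_zero, zero_mul, smul_zero, add_zero, zero_add]
  have k7 : ((a*b + b*a)*c + c*(a*b + b*a))*d - d*((a*b + b*a)*c + c*(a*b + b*a)) = 0 := by
    refine nsmul_cancel (K := K) 2 (by norm_num) ?_
    have e : (2 : ℕ) • (((a*b + b*a)*c + c*(a*b + b*a))*d - d*((a*b + b*a)*c + c*(a*b + b*a))) = (1 : ℤ) • (a * (b*c*d + c*b*d - c*d*b - d*c*b)) + (-1 : ℤ) • ((b*c*d + c*b*d - c*d*b - d*c*b) * a) + (-1 : ℤ) • (((a*b)*c*d + c*(a*b)*d - c*d*(a*b) - d*c*(a*b))) + (3 : ℤ) • ((c*(a*b)*d + (a*b)*c*d - (a*b)*d*c - d*(a*b)*c)) + (-1 : ℤ) • (((a*c)*b*d + b*(a*c)*d - b*d*(a*c) - d*b*(a*c))) + (-1 : ℤ) • ((b*(a*d)*c + (a*d)*b*c - (a*d)*c*b - c*(a*d)*b)) + (-1 : ℤ) • (b * (a*c*d + c*a*d - c*d*a - d*c*a)) + (1 : ℤ) • ((a*c*d + c*a*d - c*d*a - d*c*a) * b) + (3 : ℤ) • (((b*a)*c*d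 + c*(b*a)*d - c*d*(b*a) - d*c*(b*a))) + (1 : ℤ) • ((c*(b*a)*d + (b*a)*c*d - (b*a)*d*c - d*(b*a)*c)) + (-1 : ℤ) • (((b*c)*a*d + a*(b*c)*d - a*d*(b*c) - d*a*(b*c))) + (1 : ℤ) • ((a*(b*d)*c + (b*d)*a*c - (b*d)*c*a - c*(b*d)*a)) + (-2 : ℤ) • (c * (a*b*d + b*a*d - b*d*a - d*b*a)) + (2 : ℤ) • ((a*b*d + b*a*d - b*d*a - d*b*a) * c) + (2 : ℤ) • ((b*(c*a)*d + (c*a)*b*d - (c*a)*d*b - d*(c*a)*b)) := by noncomm_ring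
    rw [e]
    simp only [h, mul_zero, zero_mul, smul_zero, add_zero, zero_add]
  refine ⟨?_, ?_, ?_, ?_, ?_, ?_, ?_⟩ <;> simp only [br, ac]
  · rw [k1, k2]; simp
  · rw [k1, k2]; simp
  · rw [k3, k4]; simp
  · rw [k5, k6]; simp
  · exact k7
  · rw [k5, k6]; simp
  · rw [k3, k4]; simp
end

section
/- Let A be an associative algebra over a field of characteristic 0 satisfying abc + bac - bca - cba = 0. Then the anti-commutator satisfies {{{a,b},c},d} = {{{a,c},b},d} = {{{a,b},d},c} = {{a,b},{c,d}} for all a,b,c,d ∈ A. -/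
private lemma cancel_two {K A : Type*} [Field K] [CharZero K] [AddCommGroup A]
    [Module K A] {x y : A} (hxy : x + x = y + y) : x = y := by
  have h2 : (2 : K) • x = (2 : K) • y := by rw [two_smul, two_smul]; exact hxy
  have h3 := congrArg (fun z => (2 : K)⁻¹ • z) h2
  simpa [inv_smul_smul₀ (two_ne_zero : (2 : K) ≠ 0)] using h3

theorem third_type_ac_symmetry {K A : Type*} [Field K] [CharZero K]
    [NonUnitalRing A] [Module K A] [IsScalarTower K A A] [SMulCommClass K A A]
    (h : ∀ a b c : A, a*b*c + b*a*c - b*c*a - c*b*a = 0) :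
    ∀ a b c d : A,
      ac (ac (ac a b) c) d = ac (ac (ac a c) b) d ∧
      ac (ac (ac a b) c) d = ac (ac (ac a b) d) c ∧
      ac (ac (ac a b) c) d = ac (ac a b) (ac c d) := by
  intro a b c d
  refine ⟨?_, ?_, ?_⟩ <;> unfold ac
  · apply cancel_two (K := K)
    linear_combination (norm := noncomm_ring)
      - (15 : ℤ) • (d * (h a b c)) + (6 : ℤ) • ((h a b c) * d) - (2 : ℤ) • (h (a*b) c d) + (5 : ℤ) • (h a (b*c) d) - (15 : ℤ) • ((h a b d) * c) + (16 : ℤ) • (h (a*b) d c) - (16 : ℤ) • (h a (b*d) c) + (15 : ℤ) • (h a b (d*c)) - (10 : ℤ) • ((h a c b) * d) + (5 : ℤ) • (h (a*c) b d) - (2 : ℤ) • (h a (c*b) d) + (12 : ℤ) • (h a c (b*d)) - (11 : ℤ) • (b * (h a c d)) - (7 : ℤ) • ((h a c d) * b) + (5 : ℤ) • (h (a*c) d b) - (6 : ℤ) • (h a (c*d) b) + (h a c (d*b)) + (6 : ℤ) • (c * (h a d b)) - (11 : ℤ) • ((h a d b) * c) - (h a (d*b) c) + (12 : ℤ) • (h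 a d (b*c)) - (7 : ℤ) • ((h a d c) * b) - (7 : ℤ) • (a * (h b c d))
  · linear_combination (norm := noncomm_ring)
      - (2 : ℤ) • (d * (h a b c)) + (2 : ℤ) • ((h a b c) * d) - (h (a*b) c d) + (2 : ℤ) • (h (a*b) d c) - (2 : ℤ) • (h a (b*d) c) - (h a b (d*c)) - (3 : ℤ) • (h (a*c) b d) + (2 : ℤ) • (h a (c*b) d) + (h a c (b*d)) + (2 : ℤ) • (b * (h a c d)) - (2 : ℤ) • ((h a c d) * b) - (h a (c*d) b) + (3 : ℤ) • (h a c (d*b)) - (c * (h a d b)) + ((h a d b) * c) - (h a d (b*c))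
  · apply cancel_two (K := K)
    linear_combination (norm := noncomm_ring)
      - (8 : ℤ) • (d * (h a b c)) + (3 : ℤ) • ((h a b c) * d) - (h (a*b) c d) + (h a (b*c) d) - (7 : ℤ) • ((h a b d) * c) + (10 : ℤ) • (h (a*b) d c) - (10 : ℤ) • (h a (b*d) c) + (5 : ℤ) • (h a b (d*c)) - (2 : ℤ) • ((h a c b) * d) - (3 : ℤ) • (h (a*c) b d) + (3 : ℤ) • (h a (c*b) d) + (5 : ℤ) • (h a c (b*d)) - (6 : ℤ) • ((h a c d) * b) + (3 : ℤ) • (h (a*c) d b) - (4 : ℤ) • (h a (c*d) b) + (4 : ℤ) • (h a c (d*b)) + (2 : ℤ) • (c * (h a d b)) - (3 : ℤ) • ((h a d b) * c) + (3 : ℤ) • (h a d (b*c)) - (3 : ℤ) • ((h a d c) * b) - (3 : ℤ) • (a * (h b c d))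
end

section
/- Let A be an associative algebra over a field of characteristic 0 (in particular 2 is invertible) satisfying abc + bac - bca - cba = 0. Then for all a,b,c ∈ A: 2{a,{b,c}} = 3{[a,c],b} + 3{[a,b],c} + {{a,c},b} + {{a,b},c}. -/
theorem third_type_pol3 {K A : Type*} [Field K] [CharZero K]
    [NonUnitalRing A] [Module K A] [IsScalarTower K A A] [SMulCommClass K A A]
    (h : ∀ a b c : A, a*b*c + b*a*c - b*c*a - c*b*a = 0) :
    ∀ a b c : A,
      2 • ac a (ac b c) =
        3 • ac (br a c) b + 3 • ac (br a b) c + ac (ac a c) b + ac (ac a b) c := by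
  intro a b c
  have h1 := h a b c
  have h2 := h a c b
  simp only [br, ac]
  linear_combination (norm := noncomm_ring) (-2 : ℤ) • h1 + (-2 : ℤ) • h2
end

section
/- Let A be an associative algebra over a field of characteristic 0 satisfying abc + bac - bca - cba = 0. Then for all a,b,c ∈ A: 2{a,[b,c]} = −{[a,c],b} + {[a,b],c} + {{a,c},b} − {{a,b},c}. -/
theorem third_type_pol4 {K A : Type*} [Field K] [CharZero K]
    [NonUnitalRing A] [Module K A] [IsScalarTower K A A] [SMulCommClass K A A]
    (h : ∀ a b c : A, a*b*c + b*a*c - b*c*a - c*b*a = 0) :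
    ∀ a b c : A,
      2 • ac a (br b c) =
        -ac (br a c) b + ac (br a b) c + ac (ac a c) b - ac (ac a b) c := by
  intro a b c
  simp only [br, ac, two_smul]
  linear_combination (norm := noncomm_ring) h a c b - h a b c + h b c a - h c b a + h b a c - h c a b
end

section
/- Let A be an associative algebra over a field of characteristic 0 satisfying abc + bac - bca - cba = 0. Then for all a,b,c,d ∈ A: {b,[a,[c,d]]} = 0 and [b,[a,{c,d}]] = 0. -/
theorem third_type_mixed_vanishing {K A : Type*} [Field K] [CharZero K]
    [NonUnitalRing A] [Module K A] [IsScalarTower K A A] [SMulCommClass K A A]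
    (h : ∀ a b c : A, a*b*c + b*a*c - b*c*a - c*b*a = 0) :
    ∀ a b c d : A,
      ac b (br a (br c d)) = 0 ∧ br b (br a (ac c d)) = 0 := by
  have cancel : ∀ x : A, x + x = 0 → x = 0 := by
    intro x hx
    have h2 : (2:K) • x = 0 := by rw [two_smul]; exact hx
    have h3 : ((2:K)⁻¹ * 2) • x = (2:K)⁻¹ • (0:A) := by rw [← smul_smul, h2]
    rwa [inv_mul_cancel₀ two_ne_zero, one_smul, smul_zero] at h3
  intro a b c d
  constructor
  · apply cancel
    have comb : ac b (br a (br c d)) + ac b (br a (br c d)) = (8:ℤ) • ((a*b)*c*d + c*(a*b)*d - c*d*(a*b) - d*c*(a*b)) + (15:ℤ) • (c*(a*b)*d + (a*b)*c*d - (a*b)*d*c - d*(a*b)*c) + (14:ℤ) • ((a*c)*b*d + b*(a*c)*d - b*d*(a*c) - d*b*(a*c)) + (6:ℤ) • (b*(a*c)*d + (a*c)*b*d - (a*c)*d*b - d*(a*c)*b) - (30:ℤ) • ((a*d)*b*c + b*(a*d)*c - b*c*(a*d) - c*b*(a*d)) + (10:ℤ) • (b*(a*d)*c + (a*d)*b*c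 - (a*d)*c*b - c*(a*d)*b) + (16:ℤ) • ((b*a)*c*d + c*(b*a)*d - c*d*(b*a) - d*c*(b*a)) - (22:ℤ) • (c*(b*a)*d + (b*a)*c*d - (b*a)*d*c - d*(b*a)*c) - (16:ℤ) • ((b*c)*a*d + a*(b*c)*d - a*d*(b*c) - d*a*(b*c)) + (5:ℤ) • (a*(b*c)*d + (b*c)*a*d - (b*c)*d*a - d*(b*c)*a) + (11:ℤ) • (a*(b*d)*c + (b*d)*a*c - (b*d)*c*a - c*(b*d)*a) + (3:ℤ) • ((c*a)*b*d + b*(c*a)*d - b*d*(c*a) - d*b*(c*a)) - (10:ℤ) • (b*(c*a)*d + (c*a)*b*d - (c*a)*d*b - d*(c*a)*b) - (8:ℤ) • (a*(c*b)*d + (c*b)*a*d - (c*b)*d*a - d*(c*b)*a) + (13:ℤ) • ((d*a)*b*c + b*(d*a)*c - b*c*(d*a) - c*b*(d*a)) - (6:ℤ) • (b*(d*a)*c + (d*a)*b*c - (d*a)*c*b - c*(d*a)*b) - (12:ℤ) • (a * (b*c*d + c*b*d - c*d*b - d*c*b)) + (4:ℤ) • (a * (b*d*c + d*b*c - d*c*b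 - c*d*b)) - (12:ℤ) • (b * (a*c*d + c*a*d - c*d*a - d*c*a)) - (4:ℤ) • (b * (a*d*c + d*a*c - d*c*a - c*d*a)) - (16:ℤ) • (c * (a*b*d + b*a*d - b*d*a - d*b*a)) - (8:ℤ) • (d * (a*b*c + b*a*c - b*c*a - c*b*a)) := by
      simp only [ac, br]
      noncomm_ring
    rw [comb, h (a*b) c d, h c (a*b) d, h (a*c) b d, h b (a*c) d, h (a*d) b c, h b (a*d) c, h (b*a) c d, h c (b*a) d, h (b*c) a d, h a (b*c) d, h a (b*d) c, h (c*a) b d, h b (c*a) d, h a (c*b) d, h (d*a) b c, h b (d*a) c, h b c d, h b d c, h a c d, h a d c, h a b d, h a b c]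
    simp
  · apply cancel
    have comb : br b (br a (ac c d)) + br b (br a (ac c d)) = (1:ℤ) • (c*(a*b)*d + (a*b)*c*d - (a*b)*d*c - d*(a*b)*c) + (2:ℤ) • (b*(a*c)*d + (a*c)*b*d - (a*c)*d*b - d*(a*c)*b) - (2:ℤ) • ((a*d)*b*c + b*(a*d)*c - b*c*(a*d) - c*b*(a*d)) + (2:ℤ) • (b*(a*d)*c + (a*d)*b*c - (a*d)*c*b - c*(a*d)*b) + (2:ℤ) • ((b*a)*c*d + c*(b*a)*d - c*d*(b*a) - d*c*(b*a)) - (2:ℤ) • (c*(b*a)*d + (b*a)*c*d - (b*a)*d*c - d*(b*a)*c) - (2:ℤ) • ((b*c)*a*d + a*(b*c)*d - a*d*(b*c) - d*a*(b*c)) + (1:ℤ) • (a*(b*c)*d + (b*c)*a*d - (b*c)*d*a - d*(b*c)*a) + (1:ℤ) • (a*(b*d)*c + (b*d)*a*c - (b*d)*c*a - c*(b*d)*a) + (1:ℤ) • ((c*a)*b*d + b*(c*a)*d - b*d*(c*a) - d*b*(c*a)) - (2:ℤ) • (b*(c*a)*d + (c*a)*b*d - (c*a)*d*b - d*(c*a)*b)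 - (2:ℤ) • (a*(c*b)*d + (c*b)*a*d - (c*b)*d*a - d*(c*b)*a) + (1:ℤ) • ((d*a)*b*c + b*(d*a)*c - b*c*(d*a) - c*b*(d*a)) - (2:ℤ) • (b*(d*a)*c + (d*a)*b*c - (d*a)*c*b - c*(d*a)*b) - (2:ℤ) • (a*(d*b)*c + (d*b)*a*c - (d*b)*c*a - c*(d*b)*a) := by
      simp only [ac, br]
      noncomm_ring
    rw [comb, h c (a*b) d, h b (a*c) d, h (a*d) b c, h b (a*d) c, h (b*a) c d, h c (b*a) d, h (b*c) a d, h a (b*c) d, h a (b*d) c, h (c*a) b d, h b (c*a) d, h a (c*b) d, h (d*a) b c, h b (d*a) c, h a (d*b) c]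
    simp
end

section
/- Let A be an associative algebra over a field of characteristic 0 satisfying abc + bac - bca - cba = 0. Then any product of n ≥ 4 elements of A under the anti-commutator {a,b} = ab + ba is independent of the order and bracketing of the factors: the left-normed anti-commutator {{⋯{{x₁,x₂},x₃},⋯},xₙ} equals {{⋯{{x_{σ(1)},x_{σ(2)}},x_{σ(3)}},⋯},x_{σ(n)}} for every permutation σ of {1,...,n}, for n ≥ 4. -/
section helpers
variable {A : Type*} [NonUnitalRing A]

lemma ac_comm' (x y : A) : ac x y = ac y x := by
  simp only [ac]; rw [add_comm]

lemma lemA (h : ∀ a b c : A, a*b*c + b*a*c - b*c*a - c*b*a = 0) (u v a b : A) :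
    ac (ac (ac u v) a) b = ac (ac (ac u v) b) a := by
  have key : ac (ac (ac u v) a) b - ac (ac (ac u v) b) a =
      -((u*v*a + v*u*a - v*a*u - a*v*u) * b) +
      (u*v*(a*b) + v*u*(a*b) - v*(a*b)*u - (a*b)*v*u) +
      (u*v*(a*b) + v*u*(a*b) - v*(a*b)*u - (a*b)*v*u) +
      (u*v*(a*b) + v*u*(a*b) - v*(a*b)*u - (a*b)*v*u) +
      (u*v*(a*b) + v*u*(a*b) - v*(a*b)*u - (a*b)*v*u) -
      (u*(v*a)*b + (v*a)*u*b - (v*a)*b*u - b*(v*a)*u) -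
      (u*(v*a)*b + (v*a)*u*b - (v*a)*b*u - b*(v*a)*u) +
      ((u*v)*a*b + a*(u*v)*b - a*b*(u*v) - b*a*(u*v)) +
      ((u*v)*a*b + a*(u*v)*b - a*b*(u*v) - b*a*(u*v)) -
      u * (v*a*b + a*v*b - a*b*v - b*a*v) -
      u * (v*a*b + a*v*b - a*b*v - b*a*v) -
      (u*v*b + v*u*b - v*b*u - b*v*u) * a -
      (u*v*b + v*u*b - v*b*u - b*v*u) * a -
      (u*v*b + v*u*b - v*b*u - b*v*u) * a +
      (u*v*(b*a) + v*u*(b*a) - v*(b*a)*u - (b*a)*v*u) -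
      (u*(v*b)*a + (v*b)*u*a - (v*b)*a*u - a*(v*b)*u) +
      ((u*v)*b*a + b*(u*v)*a - b*a*(u*v) - a*b*(u*v)) +
      u * (v*b*a + b*v*a - b*a*v - a*b*v) -
      (u*a*v + a*u*v - a*v*u - v*a*u) * b -
      (u*a*(v*b) + a*u*(v*b) - a*(v*b)*u - (v*b)*a*u) +
      (u*(a*v)*b + (a*v)*u*b - (a*v)*b*u - b*(a*v)*u) +
      (u*(a*v)*b + (a*v)*u*b - (a*v)*b*u - b*(a*v)*u) +
      ((u*a)*v*b + v*(u*a)*b - v*b*(u*a) - b*v*(u*a)) +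
      ((u*a)*v*b + v*(u*a)*b - v*b*(u*a) - b*v*(u*a)) -
      (u*a*b + a*u*b - a*b*u - b*a*u) * v -
      (u*a*b + a*u*b - a*b*u - b*a*u) * v -
      (u*a*b + a*u*b - a*b*u - b*a*u) * v +
      (u*a*(b*v) + a*u*(b*v) - a*(b*v)*u - (b*v)*a*u) +
      (u*a*(b*v) + a*u*(b*v) - a*(b*v)*u - (b*v)*a*u) +
      (u*a*(b*v) + a*u*(b*v) - a*(b*v)*u - (b*v)*a*u) -
      (u*(a*b)*v + (a*b)*u*v - (a*b)*v*u - v*(a*b)*u) -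
      (u*(a*b)*v + (a*b)*u*v - (a*b)*v*u - v*(a*b)*u) +
      ((u*a)*b*v + b*(u*a)*v - b*v*(u*a) - v*b*(u*a)) -
      (u*b*(v*a) + b*u*(v*a) - b*(v*a)*u - (v*a)*b*u) -
      (u*b*a + b*u*a - b*a*u - a*b*u) * v -
      ((v*u)*a*b + a*(v*u)*b - a*b*(v*u) - b*a*(v*u)) -
      ((v*u)*a*b + a*(v*u)*b - a*b*(v*u) - b*a*(v*u)) -
      ((v*u)*a*b + a*(v*u)*b - a*b*(v*u) - b*a*(v*u)) -
      ((v*u)*a*b + a*(v*u)*b - a*b*(v*u) - b*a*(v*u)) +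
      v * (u*b*a + b*u*a - b*a*u - a*b*u) := by
    simp only [ac]; noncomm_ring
  simp only [h, mul_zero, zero_mul, neg_zero, add_zero, zero_add, sub_zero] at key
  exact sub_eq_zero.mp key

set_option maxHeartbeats 3200000 in
lemma lemB {K : Type*} [Field K] [CharZero K] [Module K A]
    (h : ∀ a b c : A, a*b*c + b*a*c - b*c*a - c*b*a = 0) (u v a b : A) :
    ac (ac (ac u v) a) b = ac (ac (ac u a) v) b := by
  have key : (ac (ac (ac u v) a) b - ac (ac (ac u a) v) b) +
      (ac (ac (ac u v) a) b - ac (ac (ac u a) v) b) =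
      -((u*v*a + v*u*a - v*a*u - a*v*u) * b) -
      (u*v*a + v*u*a - v*a*u - a*v*u) * b -
      (u*v*a + v*u*a - v*a*u - a*v*u) * b -
      (u*v*a + v*u*a - v*a*u - a*v*u) * b +
      (u*v*(a*b) + v*u*(a*b) - v*(a*b)*u - (a*b)*v*u) +
      (u*v*(a*b) + v*u*(a*b) - v*(a*b)*u - (a*b)*v*u) -
      (u*(v*a)*b + (v*a)*u*b - (v*a)*b*u - b*(v*a)*u) -
      (u*(v*a)*b + (v*a)*u*b - (v*a)*b*u - b*(v*a)*u) -
      (u*(v*a)*b + (v*a)*u*b - (v*a)*b*u - b*(v*a)*u) -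
      (u*(v*a)*b + (v*a)*u*b - (v*a)*b*u - b*(v*a)*u) -
      (u*(v*a)*b + (v*a)*u*b - (v*a)*b*u - b*(v*a)*u) -
      (u*(v*a)*b + (v*a)*u*b - (v*a)*b*u - b*(v*a)*u) -
      (u*(v*a)*b + (v*a)*u*b - (v*a)*b*u - b*(v*a)*u) -
      (u*(v*a)*b + (v*a)*u*b - (v*a)*b*u - b*(v*a)*u) +
      ((u*v)*a*b + a*(u*v)*b - a*b*(u*v) - b*a*(u*v)) +
      ((u*v)*a*b + a*(u*v)*b - a*b*(u*v) - b*a*(u*v)) +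
      ((u*v)*a*b + a*(u*v)*b - a*b*(u*v) - b*a*(u*v)) +
      ((u*v)*a*b + a*(u*v)*b - a*b*(u*v) - b*a*(u*v)) +
      u * (v*a*b + a*v*b - a*b*v - b*a*v) +
      u * (v*a*b + a*v*b - a*b*v - b*a*v) +
      u * (v*a*b + a*v*b - a*b*v - b*a*v) +
      u * (v*a*b + a*v*b - a*b*v - b*a*v) +
      u * (v*a*b + a*v*b - a*b*v - b*a*v) +
      u * (v*a*b + a*v*b - a*b*v - b*a*v) +
      u * (v*a*b + a*v*b - a*b*v - b*a*v) +
      u * (v*a*b + a*v*b - a*b*v - b*a*v) +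
      (u*v*b + v*u*b - v*b*u - b*v*u) * a +
      (u*v*b + v*u*b - v*b*u - b*v*u) * a +
      (u*v*b + v*u*b - v*b*u - b*v*u) * a +
      (u*v*b + v*u*b - v*b*u - b*v*u) * a +
      (u*v*b + v*u*b - v*b*u - b*v*u) * a +
      (u*v*b + v*u*b - v*b*u - b*v*u) * a +
      (u*v*(b*a) + v*u*(b*a) - v*(b*a)*u - (b*a)*v*u) +
      (u*v*(b*a) + v*u*(b*a) - v*(b*a)*u - (b*a)*v*u) +
      (u*(v*b)*a + (v*b)*u*a - (v*b)*a*u - a*(v*b)*u) +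
      (u*(v*b)*a + (v*b)*u*a - (v*b)*a*u - a*(v*b)*u) +
      (u*(v*b)*a + (v*b)*u*a - (v*b)*a*u - a*(v*b)*u) +
      (u*(v*b)*a + (v*b)*u*a - (v*b)*a*u - a*(v*b)*u) +
      (u*(v*b)*a + (v*b)*u*a - (v*b)*a*u - a*(v*b)*u) +
      (u*(v*b)*a + (v*b)*u*a - (v*b)*a*u - a*(v*b)*u) +
      (u*(v*b)*a + (v*b)*u*a - (v*b)*a*u - a*(v*b)*u) +
      (u*(v*b)*a + (v*b)*u*a - (v*b)*a*u - a*(v*b)*u) -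
      ((u*v)*b*a + b*(u*v)*a - b*a*(u*v) - a*b*(u*v)) -
      ((u*v)*b*a + b*(u*v)*a - b*a*(u*v) - a*b*(u*v)) -
      ((u*v)*b*a + b*(u*v)*a - b*a*(u*v) - a*b*(u*v)) -
      ((u*v)*b*a + b*(u*v)*a - b*a*(u*v) - a*b*(u*v)) -
      ((u*v)*b*a + b*(u*v)*a - b*a*(u*v) - a*b*(u*v)) -
      ((u*v)*b*a + b*(u*v)*a - b*a*(u*v) - a*b*(u*v)) -
      ((u*v)*b*a + b*(u*v)*a - b*a*(u*v) - a*b*(u*v)) -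
      u * (v*b*a + b*v*a - b*a*v - a*b*v) -
      u * (v*b*a + b*v*a - b*a*v - a*b*v) -
      u * (v*b*a + b*v*a - b*a*v - a*b*v) -
      u * (v*b*a + b*v*a - b*a*v - a*b*v) -
      u * (v*b*a + b*v*a - b*a*v - a*b*v) -
      u * (v*b*a + b*v*a - b*a*v - a*b*v) -
      u * (v*b*a + b*v*a - b*a*v - a*b*v) -
      u * (v*b*a + b*v*a - b*a*v - a*b*v) -
      u * (v*b*a + b*v*a - b*a*v - a*b*v) -
      (u*a*v + a*u*v - a*v*u - v*a*u) * b -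
      (u*a*v + a*u*v - a*v*u - v*a*u) * b -
      (u*a*(v*b) + a*u*(v*b) - a*(v*b)*u - (v*b)*a*u) -
      (u*a*(v*b) + a*u*(v*b) - a*(v*b)*u - (v*b)*a*u) -
      (u*(a*v)*b + (a*v)*u*b - (a*v)*b*u - b*(a*v)*u) -
      (u*(a*v)*b + (a*v)*u*b - (a*v)*b*u - b*(a*v)*u) -
      (u*(a*v)*b + (a*v)*u*b - (a*v)*b*u - b*(a*v)*u) -
      (u*(a*v)*b + (a*v)*u*b - (a*v)*b*u - b*(a*v)*u) -
      (u*(a*v)*b + (a*v)*u*b - (a*v)*b*u - b*(a*v)*u) -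
      (u*(a*v)*b + (a*v)*u*b - (a*v)*b*u - b*(a*v)*u) +
      (u*a*b + a*u*b - a*b*u - b*a*u) * v +
      (u*a*b + a*u*b - a*b*u - b*a*u) * v +
      (u*a*b + a*u*b - a*b*u - b*a*u) * v +
      (u*a*b + a*u*b - a*b*u - b*a*u) * v -
      (u*a*(b*v) + a*u*(b*v) - a*(b*v)*u - (b*v)*a*u) -
      (u*a*(b*v) + a*u*(b*v) - a*(b*v)*u - (b*v)*a*u) -
      (u*a*(b*v) + a*u*(b*v) - a*(b*v)*u - (b*v)*a*u) -
      (u*a*(b*v) + a*u*(b*v) - a*(b*v)*u - (b*v)*a*u) -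
      ((u*a)*b*v + b*(u*a)*v - b*v*(u*a) - v*b*(u*a)) -
      (u*b*v + b*u*v - b*v*u - v*b*u) * a -
      (u*b*v + b*u*v - b*v*u - v*b*u) * a -
      (u*b*v + b*u*v - b*v*u - v*b*u) * a -
      (u*b*v + b*u*v - b*v*u - v*b*u) * a -
      (u*b*v + b*u*v - b*v*u - v*b*u) * a +
      (u*b*(v*a) + b*u*(v*a) - b*(v*a)*u - (v*a)*b*u) +
      (u*b*(v*a) + b*u*(v*a) - b*(v*a)*u - (v*a)*b*u) +
      (u*b*(v*a) + b*u*(v*a) - b*(v*a)*u - (v*a)*b*u) +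
      (u*b*(v*a) + b*u*(v*a) - b*(v*a)*u - (v*a)*b*u) +
      (u*b*(v*a) + b*u*(v*a) - b*(v*a)*u - (v*a)*b*u) +
      (u*b*(v*a) + b*u*(v*a) - b*(v*a)*u - (v*a)*b*u) +
      (u*b*(v*a) + b*u*(v*a) - b*(v*a)*u - (v*a)*b*u) +
      (u*b*(v*a) + b*u*(v*a) - b*(v*a)*u - (v*a)*b*u) +
      (u*b*(v*a) + b*u*(v*a) - b*(v*a)*u - (v*a)*b*u) +
      (u*b*(v*a) + b*u*(v*a) - b*(v*a)*u - (v*a)*b*u) +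
      (u*b*(v*a) + b*u*(v*a) - b*(v*a)*u - (v*a)*b*u) +
      (u*b*(v*a) + b*u*(v*a) - b*(v*a)*u - (v*a)*b*u) +
      (u*b*(v*a) + b*u*(v*a) - b*(v*a)*u - (v*a)*b*u) +
      (u*b*(v*a) + b*u*(v*a) - b*(v*a)*u - (v*a)*b*u) -
      (u*b*a + b*u*a - b*a*u - a*b*u) * v +
      ((v*u)*a*b + a*(v*u)*b - a*b*(v*u) - b*a*(v*u)) +
      ((v*u)*a*b + a*(v*u)*b - a*b*(v*u) - b*a*(v*u)) -
      v * (u*b*a + b*u*a - b*a*u - a*b*u) -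
      v * (u*b*a + b*u*a - b*a*u - a*b*u) -
      v * (u*b*a + b*u*a - b*a*u - a*b*u) -
      v * (u*b*a + b*u*a - b*a*u - a*b*u) -
      v * (u*b*a + b*u*a - b*a*u - a*b*u) -
      v * (u*b*a + b*u*a - b*a*u - a*b*u) -
      v * (u*b*a + b*u*a - b*a*u - a*b*u) -
      v * (u*b*a + b*u*a - b*a*u - a*b*u) := by
    simp only [ac]; noncomm_ring
  simp only [h, mul_zero, zero_mul, neg_zero, add_zero, zero_add, sub_zero] at key
  have h2 : (2:K) • (ac (ac (ac u v) a) b - ac (ac (ac u a) v) b) = 0 := by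
    rw [two_smul]; exact key
  have h3 := (smul_eq_zero.mp h2).resolve_left (by norm_num : (2:K) ≠ 0)
  exact sub_eq_zero.mp h3

lemma foldE (h : ∀ a b c : A, a*b*c + b*a*c - b*c*a - c*b*a = 0)
    {l₁ l₂ : List A} (p : l₁.Perm l₂) :
    ∀ u v : A, l₁.foldl ac (ac u v) = l₂.foldl ac (ac u v) := by
  induction p with
  | nil => intro u v; rfl
  | cons x p ih =>
      intro u v
      simp only [List.foldl_cons]
      exact ih (ac u v) x
  | swap x y t =>
      intro u v
      simp only [List.foldl_cons]
      rw [lemA h u v y x]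
  | trans p₁ p₂ ih₁ ih₂ =>
      intro u v
      rw [ih₁, ih₂]

lemma foldG {K : Type*} [Field K] [CharZero K] [Module K A]
    (h : ∀ a b c : A, a*b*c + b*a*c - b*c*a - c*b*a = 0)
    {l₁ l₂ : List A} (p : l₁.Perm l₂) (hl : 3 ≤ l₁.length) :
    ∀ a : A, l₁.foldl ac a = l₂.foldl ac a := by
  induction p with
  | nil => simp at hl
  | cons x p ih =>
      intro a
      simp only [List.foldl_cons]
      exact foldE h p a x
  | swap x y t =>
      intro a
      match t with
      | c :: r =>
        simp only [List.foldl_cons]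
        rw [lemB (K := K) h a y x c]
  | trans p₁ p₂ ih₁ ih₂ =>
      intro a
      rw [ih₁ hl, ih₂ (by rw [← p₁.length_eq]; exact hl)]

lemma foldMain {K : Type*} [Field K] [CharZero K] [Module K A]
    (h : ∀ a b c : A, a*b*c + b*a*c - b*c*a - c*b*a = 0)
    {l₁ l₂ : List A} (p : l₁.Perm l₂) :
    4 ≤ l₁.length → ∀ a₁ a₂ t₁ t₂, l₁ = a₁ :: t₁ → l₂ = a₂ :: t₂ →
      t₁.foldl ac a₁ = t₂.foldl ac a₂ := by
  induction p with
  | nil => intro hl; simp at hl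
  | cons x p ih =>
      intro hl a₁ a₂ t₁ t₂ e₁ e₂
      cases e₁; cases e₂
      exact foldG (K := K) h p (by simp at hl ⊢; omega) x
  | swap x y t =>
      intro hl a₁ a₂ t₁ t₂ e₁ e₂
      cases e₁; cases e₂
      simp only [List.foldl_cons]
      rw [ac_comm']
  | trans p₁ p₂ ih₁ ih₂ =>
      rename_i la lb lc
      intro hl a₁ a₂ t₁ t₂ e₁ e₂
      match lb, p₁, p₂, ih₁, ih₂ with
      | [], p₁, _, _, _ =>
          exfalso
          have hle := p₁.length_eq
          rw [e₁] at hle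
          simp at hle
      | b :: s, p₁, p₂, ih₁, ih₂ =>
          exact (ih₁ hl a₁ b t₁ s e₁ rfl).trans
            (ih₂ (by rw [← p₁.length_eq]; exact hl) b a₂ s t₂ rfl e₂)

end helpers

theorem third_type_ac_commutative {K A : Type*} [Field K] [CharZero K]
    [NonUnitalRing A] [Module K A] [IsScalarTower K A A] [SMulCommClass K A A]
    (h : ∀ a b c : A, a*b*c + b*a*c - b*c*a - c*b*a = 0)
    (n : ℕ) (hn : 4 ≤ n) (x : Fin n → A) (σ : Equiv.Perm (Fin n)) :
    (List.ofFn fun i : Fin n => x (σ i)).tail.foldl ac (x (σ ⟨0, by omega⟩)) =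
      (List.ofFn x).tail.foldl ac (x ⟨0, by omega⟩) := by
  obtain ⟨m, rfl⟩ : ∃ m, n = m + 1 := ⟨n - 1, by omega⟩
  have perm : (List.ofFn fun i : Fin (m+1) => x (σ i)).Perm (List.ofFn x) :=
    σ.ofFn_comp_perm x
  refine foldMain (K := K) h perm ?_ _ _ _ _ ?_ ?_
  · simp; omega
  · rw [List.ofFn_succ]
    simp [Fin.mk_zero]
  · rw [List.ofFn_succ]
    simp [Fin.mk_zero]
end

section
/- Let A be an associative algebra over a field of characteristic 0 satisfying abc + bac - bca - cba = 0. Then for all a,b,c,d ∈ A: [{{a,b},c},d] = 2{[{a,b},d],c} and {{a,b},[c,d]} = {a,{b,[c,d]}}. -/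
private lemma cancel6 {K A : Type*} [Field K] [CharZero K] [AddCommGroup A]
    [Module K A] {x y : A} (hxy : (6:ℤ) • x = (6:ℤ) • y) : x = y := by
  have h6 : ((6:ℤ):K) • x = ((6:ℤ):K) • y := by
    rw [Int.cast_smul_eq_zsmul, Int.cast_smul_eq_zsmul]; exact hxy
  exact smul_right_injective A (by norm_num : ((6:ℤ):K) ≠ 0) h6

theorem third_type_two_ac_identities {K A : Type*} [Field K] [CharZero K]
    [NonUnitalRing A] [Module K A] [IsScalarTower K A A] [SMulCommClass K A A]
    (h : ∀ a b c : A, a*b*c + b*a*c - b*c*a - c*b*a = 0) :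
    ∀ a b c d : A,
      br (ac (ac a b) c) d = 2 • ac (br (ac a b) d) c ∧
      ac (ac a b) (br c d) = ac a (ac b (br c d)) := by
  intro a b c d
  constructor
  · refine cancel6 (K := K) ?_
    simp only [br, ac]
    linear_combination (norm := noncomm_ring)
      ((22 : ℤ)) • (d * h a b c) +
      ((4 : ℤ)) • (h a b c * d) +
      ((-14 : ℤ)) • (c * h a b d) +
      ((-18 : ℤ)) • (h a b d * c) +
      ((-11 : ℤ)) • (d * h a c b) +
      ((-2 : ℤ)) • (h a c b * d) +
      ((-14 : ℤ)) • (b * h a c d) +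
      ((-7 : ℤ)) • (h a c d * b) +
      ((7 : ℤ)) • (c * h a d b) +
      ((9 : ℤ)) • (h a d b * c) +
      ((16 : ℤ)) • (b * h a d c) +
      ((2 : ℤ)) • (h a d c * b) +
      ((-14 : ℤ)) • (a * h b c d) +
      ((-7 : ℤ)) • (h b c d * a) +
      ((16 : ℤ)) • (a * h b d c) +
      ((2 : ℤ)) • (h b d c * a) +
      ((10 : ℤ)) • (h c (a*b) d) +
      ((25 : ℤ)) • (h (a*c) b d) +
      ((-9 : ℤ)) • (h b (a*c) d) +
      ((-10 : ℤ)) • (h (a*d) b c) +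
      ((15 : ℤ)) • (h (b*c) a d) +
      ((-9 : ℤ)) • (h a (b*c) d)
  · refine cancel6 (K := K) ?_
    simp only [br, ac]
    linear_combination (norm := noncomm_ring)
      ((2 : ℤ)) • (d * h a b c) +
      ((1 : ℤ)) • (h a b c * d) +
      ((-10 : ℤ)) • (c * h a b d) +
      ((1 : ℤ)) • (h a b d * c) +
      ((-4 : ℤ)) • (d * h a c b) +
      ((-2 : ℤ)) • (h a c b * d) +
      ((-4 : ℤ)) • (b * h a c d) +
      ((-8 : ℤ)) • (h a c d * b) +
      ((8 : ℤ)) • (c * h a d b) +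
      ((-8 : ℤ)) • (h a d b * c) +
      ((2 : ℤ)) • (b * h a d c) +
      ((4 : ℤ)) • (h a d c * b) +
      ((-7 : ℤ)) • (a * h b c d) +
      ((-2 : ℤ)) • (h b c d * a) +
      ((5 : ℤ)) • (a * h b d c) +
      ((4 : ℤ)) • (h b d c * a) +
      ((6 : ℤ)) • (h (a*b) c d) +
      ((6 : ℤ)) • (h c (a*b) d) +
      ((9 : ℤ)) • (h (a*c) b d) +
      ((-9 : ℤ)) • (h (a*d) b c) +
      ((-12 : ℤ)) • (h (b*c) a d) +
      ((6 : ℤ)) • (h a (b*c) d)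
end
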